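/- arXiv:quant-ph/0204096 — 5 statements merged into one kernel-verified Lean document; each statement's English description precedes it below -/
import Mathlib

section
/- Let ρ and σ be density matrices on nonempty finite types ι and let 0 ≤ δ ≤ 1. If D(ρ,σ) ≤ 2(1−δ), then rank σ ≥ 𝒮(ρ,δ). -/
open scoped BigOperators Classical ComplexOrder

/-- A density matrix: positive semidefinite with trace one. -/
def IsDensity {ι : Type*} [Fintype ι] [DecidableEq ι] (ρ : Matrix ι ι ℂ) : Prop :=
  ρ.PosSemidef ∧ ρ.trace = 1

/-- The trace distance `D(ρ,σ) = Tr|ρ−σ|`: the sum of the absolute values of the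
eigenvalues of the Hermitian matrix `ρ − σ` (no factor 1/2). -/
noncomputable def traceDist {ι : Type*} [Fintype ι] [DecidableEq ι]
    (ρ σ : Matrix ι ι ℂ) : ℝ :=
  if h : (ρ - σ).IsHermitian then ∑ i, |h.eigenvalues i| else 0

/-- The minimal dimension `𝒮(ρ,δ)` of a `δ`-significant subspace: the minimum rank of an
orthogonal projection `P` (`P = Pᴴ = P²`) with `Tr(Pρ) ≥ δ`. -/
noncomputable def sigDim {ι : Type*} [Fintype ι] [DecidableEq ι]
    (ρ : Matrix ι ι ℂ) (δ : ℝ) : ℕ :=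
  sInf {m : ℕ | ∃ P : Matrix ι ι ℂ,
    P.IsHermitian ∧ P * P = P ∧ δ ≤ ((P * ρ).trace).re ∧ P.rank = m}

/-!
Let `P` be the projection onto the support of `σ`. Then `rank P ≤ rank σ` and `Pσ = σ`, so
`Tr(Pρ) = 1 + Tr(P(ρ - σ))`. Since `0 ≤ P ≤ 1`, `Tr(P(ρ - σ))` is at least the sum of the negative
eigenvalues of `ρ - σ`, which is `-D(ρ,σ)/2` because `ρ - σ` is traceless. Hence
`Tr(Pρ) ≥ 1 - D(ρ,σ)/2 ≥ δ`, and `P` is admissible in the definition of `𝒮(ρ,δ)`.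
-/

open Matrix
open scoped MatrixOrder

theorem Finset.sum_min_zero_eq_neg_half_sum_abs {ι : Type*} (s : Finset ι) (f : ι → ℝ)
    (hf : ∑ i ∈ s, f i = 0) : ∑ i ∈ s, min (f i) 0 = -(∑ i ∈ s, |f i|) / 2 := by
  have hmin (x : ℝ) : min x 0 = (x - |x|) / 2 := by
    rcases le_total x 0 with h | h
    · rw [min_eq_left h, abs_of_nonpos h]; ring
    · rw [min_eq_right h, abs_of_nonneg h]; ring
  simp only [hmin, ← Finset.sum_div, Finset.sum_sub_distrib, hf, zero_sub]

namespace Matrix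

variable {n 𝕜 : Type*} [RCLike 𝕜] [DecidableEq n]

lemma re_diag_mem_Icc_of_nonneg_of_le_one {Q : Matrix n n 𝕜} (hQ0 : 0 ≤ Q) (hQ1 : Q ≤ 1)
    (i : n) : RCLike.re (Q i i) ∈ Set.Icc 0 1 := by
  have h0 : 0 ≤ Q i i := (nonneg_iff_posSemidef.mp hQ0).diag_nonneg
  have h1 : 0 ≤ (1 - Q) i i := (le_iff.mp hQ1).diag_nonneg
  rw [sub_apply, one_apply_eq, sub_nonneg] at h1
  exact ⟨by simpa using (RCLike.le_iff_re_im.mp h0).1, by simpa using (RCLike.le_iff_re_im.mp h1).1⟩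

variable [Fintype n]

/-- `x * x⁻¹` is the indicator of `x ≠ 0`, since `0⁻¹ = 0`. -/
noncomputable def supportProj (A : Matrix n n 𝕜) : Matrix n n 𝕜 :=
  cfc (fun x : ℝ => x * x⁻¹) A

lemma continuousOn_spectrum (A : Matrix n n 𝕜) (f : ℝ → ℝ) : ContinuousOn f (spectrum ℝ A) :=
  A.finite_real_spectrum.continuousOn f

lemma isStarProjection_supportProj (A : Matrix n n 𝕜) : IsStarProjection A.supportProj where
  isIdempotentElem := by
    rw [IsIdempotentElem, supportProj,
      ← cfc_mul _ _ _ (A.continuousOn_spectrum _) (A.continuousOn_spectrum _)]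
    refine cfc_congr fun x _ => ?_
    rcases eq_or_ne x 0 with rfl | hx
    · simp
    · simp [hx]
  isSelfAdjoint := cfc_predicate _ _

namespace IsHermitian

variable {A : Matrix n n 𝕜} (hA : A.IsHermitian)
include hA

lemma supportProj_mul_self : A.supportProj * A = A := by
  nth_rw 2 [← cfc_id' ℝ A]
  rw [supportProj, ← cfc_mul _ _ _ (A.continuousOn_spectrum _) (A.continuousOn_spectrum _)]
  exact (cfc_congr fun x _ => mul_inv_mul_cancel x).trans (cfc_id' ℝ A)

lemma rank_supportProj_le : A.supportProj.rank ≤ A.rank := by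
  rw [supportProj, cfc_mul (fun x : ℝ => x) (fun x => x⁻¹) A (A.continuousOn_spectrum _)
    (A.continuousOn_spectrum _), cfc_id' ℝ A]
  exact rank_mul_le_left _ _

lemma sum_min_eigenvalues_le_re_trace_mul {P : Matrix n n 𝕜} (hP0 : 0 ≤ P) (hP1 : P ≤ 1) :
    ∑ i, min (hA.eigenvalues i) 0 ≤ RCLike.re (P * A).trace := by
  set U : Matrix n n 𝕜 := (hA.eigenvectorUnitary : Matrix n n 𝕜)
  set Q := star U * P * U
  have hQ0 : 0 ≤ Q := star_left_conjugate_nonneg hP0 U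
  have hQ1 : Q ≤ 1 := by simpa [U] using star_left_conjugate_le_conjugate hP1 U
  have htr : (P * A).trace = ∑ i, Q i i * hA.eigenvalues i :=
    calc (P * A).trace = (Q * diagonal (RCLike.ofReal ∘ hA.eigenvalues)).trace := by
          conv_lhs => rw [hA.spectral_theorem, Unitary.conjStarAlgAut_apply, ← Matrix.mul_assoc,
            trace_mul_comm]
          simp only [Q, U, Matrix.mul_assoc]
      _ = ∑ i, Q i i * hA.eigenvalues i := by simp [trace, mul_diagonal]
  rw [htr, map_sum]
  refine Finset.sum_le_sum fun i _ => ?_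
  obtain ⟨hq0, hq1⟩ := re_diag_mem_Icc_of_nonneg_of_le_one hQ0 hQ1 i
  rw [RCLike.re_mul_ofReal]
  rcases le_total (hA.eigenvalues i) 0 with h | h
  · rw [min_eq_left h]; nlinarith
  · rw [min_eq_right h]; positivity

end IsHermitian

end Matrix

lemma neg_half_traceDist_le_re_trace_mul_sub {ι : Type*} [Fintype ι] [DecidableEq ι]
    {ρ σ P : Matrix ι ι ℂ} (hρ : ρ.IsHermitian) (hσ : σ.IsHermitian) (htr : ρ.trace = σ.trace)
    (hP0 : 0 ≤ P) (hP1 : P ≤ 1) : -traceDist ρ σ / 2 ≤ ((P * (ρ - σ)).trace).re := by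
  have hA := hρ.sub hσ
  have hsum : ∑ i, hA.eigenvalues i = 0 := by
    have h := hA.trace_eq_sum_eigenvalues
    rw [trace_sub, htr, sub_self, ← RCLike.ofReal_sum] at h
    exact RCLike.ofReal_eq_zero.mp h.symm
  rw [traceDist, dif_pos hA, ← Finset.sum_min_zero_eq_neg_half_sum_abs _ _ hsum]
  exact hA.sum_min_eigenvalues_le_re_trace_mul hP0 hP1

theorem rank_ge_sigDim_of_traceDist_le_general {ι : Type*} [Fintype ι] [DecidableEq ι]
    (ρ σ : Matrix ι ι ℂ) (hρ : IsDensity ρ) (hσ : IsDensity σ)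
    (δ : ℝ)
    (hD : traceDist ρ σ ≤ 2 * (1 - δ)) :
    sigDim ρ δ ≤ σ.rank := by
  obtain ⟨hρ, hρtr⟩ := hρ
  obtain ⟨hσ, hσtr⟩ := hσ
  have hP := σ.isStarProjection_supportProj
  have hbound := neg_half_traceDist_le_re_trace_mul_sub hρ.isHermitian hσ.isHermitian
    (hρtr.trans hσtr.symm) hP.nonneg hP.le_one
  rw [Matrix.mul_sub, trace_sub, hσ.isHermitian.supportProj_mul_self, hσtr, Complex.sub_re,
    Complex.one_re] at hbound
  have htrace : δ ≤ ((σ.supportProj * ρ).trace).re := by linarith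
  refine le_trans (Nat.sInf_le ?_) hσ.isHermitian.rank_supportProj_le
  exact ⟨_, hP.isSelfAdjoint.isHermitian, hP.isIdempotentElem.eq, htrace, rfl⟩

/-- if `D(ρ,σ) ≤ 2(1−δ)` then `rank σ ≥ 𝒮(ρ,δ)`. -/
theorem rank_ge_sigDim_of_traceDist_le {ι : Type*} [Fintype ι] [DecidableEq ι] [Nonempty ι]
    (ρ σ : Matrix ι ι ℂ) (hρ : IsDensity ρ) (hσ : IsDensity σ)
    (δ : ℝ) (hδ0 : 0 ≤ δ) (hδ1 : δ ≤ 1)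
    (hD : traceDist ρ σ ≤ 2 * (1 - δ)) :
    sigDim ρ δ ≤ σ.rank :=
  rank_ge_sigDim_of_traceDist_le_general ρ σ hρ hσ δ hD
end

section
/- For a density matrix ρ and 0 ≤ δ ≤ 1, the minimal significant-subspace dimension is achieved by the top eigenvalues: 𝒮(ρ,δ) equals the least natural number m such that the sum of the m largest eigenvalues of ρ (counted with multiplicity) is at least δ. Equivalently, for every natural number m, the maximum of Tr(Πρ) over orthogonal projection matrices Π of rank m equals the sum of the m largest eigenvalues of ρ. -/
open scoped BigOperators Classical ComplexOrder

/-- The `n`-fold Kronecker power of `ρ`, indexed by `Fin n → ι`. -/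
noncomputable def kronPow {ι : Type*} (ρ : Matrix ι ι ℂ) (n : ℕ) :
    Matrix (Fin n → ι) (Fin n → ι) ℂ :=
  Matrix.of fun i j => ∏ k, ρ (i k) (j k)

/-- The rank-one matrix `|u⟩⟨u|`. -/
noncomputable def outer {ι : Type*} (u : ι → ℂ) : Matrix ι ι ℂ :=
  Matrix.of fun i j => u i * starRingEnd ℂ (u j)

/-- The partial trace over the second subsystem. -/
noncomputable def ptraceB {A B : Type*} [Fintype B]
    (M : Matrix (A × B) (A × B) ℂ) : Matrix A A ℂ :=
  Matrix.of fun a a' => ∑ b, M (a, b) (a', b)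

/-- The sum of the `m` largest values of `p` (counted with multiplicity), expressed as the
supremum of `∑ i in s, p i` over subsets `s` of cardinality `m`. -/
noncomputable def topSum {ι : Type*} [Fintype ι] (p : ι → ℝ) (m : ℕ) : ℝ :=
  sSup {x : ℝ | ∃ s : Finset ι, s.card = m ∧ x = ∑ i ∈ s, p i}

/-!
Diagonalise `A = U diag(λ) U⋆`. For an orthogonal projection `P`, the diagonal `q` of `U⋆ P U`
has real parts in `[0, 1]` (both `P` and `1 - P` are positive) summing to `tr P = rank P`, and
`Re tr (P A) = ∑ qᵢ λᵢ`. A weighted sum with such weights is at most the sum of the `rank P`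
largest `λᵢ`, with equality when `P` projects onto the corresponding eigenvectors. Hence the
ranks of projections `P` with `δ ≤ Re tr (P A)` are exactly the `m ≤ card ι` with
`δ ≤ topSum λ m`, and both sets have the same infimum.
-/

open Finset Matrix Unitary
open scoped MatrixOrder

section TopSum

variable {ι : Type*} [Fintype ι] (p : ι → ℝ)

theorem exists_card_eq_threshold {m : ℕ} (hm : m ≤ Fintype.card ι) :
    ∃ (s : Finset ι) (t : ℝ), #s = m ∧ (∀ i ∈ s, t ≤ p i) ∧ ∀ i ∉ s, p i ≤ t := by
  induction m with
  | zero =>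
    obtain ⟨t, ht⟩ := (Set.finite_range p).bddAbove
    exact ⟨∅, t, rfl, by simp, fun i _ => ht ⟨i, rfl⟩⟩
  | succ m ih =>
    obtain ⟨s, t, hs, hin, hout⟩ := ih (by omega)
    have hne : sᶜ.Nonempty := by
      rw [← card_pos, card_compl, hs]
      omega
    obtain ⟨j, hj, hmax⟩ := exists_max_image sᶜ p hne
    rw [mem_compl] at hj
    refine ⟨insert j s, p j, by rw [card_insert_of_notMem hj, hs], ?_, ?_⟩
    · intro i hi
      rcases mem_insert.mp hi with rfl | hi
      · exact le_rfl
      · exact (hout j hj).trans (hin i hi)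
    · intro i hi
      exact hmax i (mem_compl.mpr fun h => hi (mem_insert_of_mem h))

theorem sum_mul_le_sum_of_threshold {q : ι → ℝ} {s : Finset ι} {t : ℝ}
    (hq0 : ∀ i, 0 ≤ q i) (hq1 : ∀ i, q i ≤ 1) (hq : ∑ i, q i = #s)
    (hin : ∀ i ∈ s, t ≤ p i) (hout : ∀ i ∉ s, p i ≤ t) :
    ∑ i, q i * p i ≤ ∑ i ∈ s, p i := by
  -- the terms `(𝟙ₛ i - q i) * (p i - t)` are nonnegative and add up to the difference
  have hterm : ∀ i, 0 ≤ ((if i ∈ s then 1 else 0) - q i) * (p i - t) := fun i => by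
    by_cases hi : i ∈ s
    · rw [if_pos hi]
      exact mul_nonneg (by linarith [hq1 i]) (by linarith [hin i hi])
    · rw [if_neg hi]
      exact mul_nonneg_of_nonpos_of_nonpos (by linarith [hq0 i]) (by linarith [hout i hi])
  have hsum : ∑ i, ((if i ∈ s then 1 else 0) - q i) * (p i - t)
      = ∑ i ∈ s, p i - ∑ i, q i * p i := by
    simp only [sub_mul, mul_sub, sum_sub_distrib, ite_mul, one_mul, zero_mul, sum_ite_mem,
      univ_inter, ← sum_mul, hq, sum_const, nsmul_eq_mul]
    ring
  linarith [sum_nonneg fun i (_ : i ∈ univ) => hterm i]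

theorem topSum_card_eq_sum {s : Finset ι} {t : ℝ} (hin : ∀ i ∈ s, t ≤ p i)
    (hout : ∀ i ∉ s, p i ≤ t) : topSum p #s = ∑ i ∈ s, p i := by
  refine IsGreatest.csSup_eq ⟨⟨s, rfl, rfl⟩, ?_⟩
  rintro x ⟨s', hs', rfl⟩
  have := sum_mul_le_sum_of_threshold p (q := fun i => if i ∈ s' then 1 else 0)
    (fun i => by split_ifs <;> norm_num) (fun i => by split_ifs <;> norm_num)
    (by simp [hs']) hin hout
  simpa [ite_mul, sum_ite_mem] using this

theorem topSum_zero : topSum p 0 = 0 := by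
  simp [topSum]

theorem topSum_of_card_lt {m : ℕ} (hm : Fintype.card ι < m) : topSum p m = 0 := by
  have hempty : {x : ℝ | ∃ s : Finset ι, #s = m ∧ x = ∑ i ∈ s, p i} = ∅ :=
    Set.eq_empty_of_forall_notMem fun x ⟨s, hs, _⟩ => by
      have := card_le_univ s
      omega
  rw [topSum, hempty, Real.sSup_empty]

end TopSum

theorem Matrix.trace_eq_rank_of_isIdempotentElem {K ι : Type*} [Field K] [Fintype ι]
    [DecidableEq ι] {P : Matrix ι ι K} (hP : IsIdempotentElem P) : P.trace = P.rank := by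
  have hP' : IsIdempotentElem (toLin' P) := hP.map toLinAlgEquiv'
  rw [← trace_toLin'_eq, (LinearMap.IsIdempotentElem.isProj_range _ hP').trace]
  rfl

section Projections

variable {𝕜 ι : Type*} [RCLike 𝕜] [Fintype ι] [DecidableEq ι]

theorem Matrix.isStarProjection_diagonal_indicator (s : Finset ι) :
    IsStarProjection (diagonal fun i => if i ∈ s then (1 : 𝕜) else 0) := by
  refine ⟨?_, ?_⟩
  · rw [IsIdempotentElem, diagonal_mul_diagonal]
    congr 1
    ext i
    by_cases hi : i ∈ s <;> simp [hi]
  · rw [IsSelfAdjoint, star_eq_conjTranspose, diagonal_conjTranspose]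
    congr 1
    ext i
    by_cases hi : i ∈ s <;> simp [hi]

theorem IsStarProjection.re_diag_mem_Icc {Q : Matrix ι ι 𝕜} (hQ : IsStarProjection Q) (i : ι) :
    RCLike.re (Q i i) ∈ Set.Icc 0 1 := by
  have hpsd : ∀ {R : Matrix ι ι 𝕜}, IsStarProjection R → 0 ≤ RCLike.re (R i i) := fun hR =>
    (RCLike.nonneg_iff.mp (nonneg_iff_posSemidef.mp hR.nonneg).diag_nonneg).1
  have h := hpsd hQ.one_sub
  simp only [Matrix.sub_apply, one_apply_eq, map_sub, RCLike.one_re] at h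
  exact ⟨hpsd hQ, by linarith⟩

namespace Matrix.IsHermitian

variable {A : Matrix ι ι 𝕜} (hA : A.IsHermitian)

theorem trace_mul_eq_sum_diag_mul_eigenvalues (P : Matrix ι ι 𝕜) :
    (P * A).trace =
      ∑ i, (conjStarAlgAut 𝕜 _ hA.eigenvectorUnitary).symm P i i * hA.eigenvalues i := by
  set φ := conjStarAlgAut 𝕜 _ hA.eigenvectorUnitary
  conv_lhs => rw [hA.spectral_theorem, ← φ.apply_symm_apply P, ← map_mul, trace_map']
  simp [Matrix.trace, mul_diagonal]

theorem re_trace_mul_le_topSum {P : Matrix ι ι 𝕜} (hP : IsStarProjection P) :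
    RCLike.re (P * A).trace ≤ topSum hA.eigenvalues P.rank := by
  set Q := (conjStarAlgAut 𝕜 _ hA.eigenvectorUnitary).symm P
  have hQ : IsStarProjection Q := hP.map _
  have hQsum : ∑ i, RCLike.re (Q i i) = P.rank := by
    rw [← map_sum]
    change RCLike.re Q.trace = _
    rw [trace_map', trace_eq_rank_of_isIdempotentElem hP.1, RCLike.natCast_re]
  obtain ⟨s, t, hs, hin, hout⟩ := exists_card_eq_threshold hA.eigenvalues (rank_le_card_width P)
  rw [hA.trace_mul_eq_sum_diag_mul_eigenvalues, ← hs, topSum_card_eq_sum _ hin hout, map_sum]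
  simp only [RCLike.re_mul_ofReal]
  exact sum_mul_le_sum_of_threshold _ (fun i => (hQ.re_diag_mem_Icc i).1)
    (fun i => (hQ.re_diag_mem_Icc i).2) (hQsum.trans (congrArg _ hs.symm)) hin hout

theorem exists_isStarProjection_re_trace_mul_eq (s : Finset ι) :
    ∃ P : Matrix ι ι 𝕜, IsStarProjection P ∧ P.rank = #s ∧
      RCLike.re (P * A).trace = ∑ i ∈ s, hA.eigenvalues i := by
  set φ := conjStarAlgAut 𝕜 _ hA.eigenvectorUnitary
  set D : Matrix ι ι 𝕜 := diagonal fun i => if i ∈ s then 1 else 0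
  have hD : IsStarProjection D := isStarProjection_diagonal_indicator s
  refine ⟨φ D, hD.map φ, ?_, ?_⟩
  · have h := trace_eq_rank_of_isIdempotentElem (hD.map φ).1
    rw [trace_map', trace_diagonal] at h
    exact Nat.cast_injective (R := 𝕜) (by simpa using h.symm)
  · rw [hA.trace_mul_eq_sum_diag_mul_eigenvalues, φ.symm_apply_apply, map_sum]
    simp [D, apply_ite, sum_ite_mem]

theorem isGreatest_re_trace_mul {m : ℕ} (hm : m ≤ Fintype.card ι) :
    IsGreatest {x : ℝ | ∃ P : Matrix ι ι 𝕜,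
        P.IsHermitian ∧ P * P = P ∧ P.rank = m ∧ x = RCLike.re (P * A).trace}
      (topSum hA.eigenvalues m) := by
  obtain ⟨s, t, rfl, hin, hout⟩ := exists_card_eq_threshold hA.eigenvalues hm
  obtain ⟨P, hP, hrank, htr⟩ := hA.exists_isStarProjection_re_trace_mul_eq s
  refine ⟨⟨P, hP.2, hP.1, hrank, ?_⟩, ?_⟩
  · rw [htr, topSum_card_eq_sum _ hin hout]
  · rintro x ⟨P, hherm, hidem, hrank, rfl⟩
    rw [← hrank]
    exact hA.re_trace_mul_le_topSum ⟨hidem, hherm⟩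

theorem sSup_re_trace_mul_eq_topSum (m : ℕ) :
    sSup {x : ℝ | ∃ P : Matrix ι ι 𝕜,
        P.IsHermitian ∧ P * P = P ∧ P.rank = m ∧ x = RCLike.re (P * A).trace}
      = topSum hA.eigenvalues m := by
  rcases le_or_gt m (Fintype.card ι) with hm | hm
  · exact (hA.isGreatest_re_trace_mul hm).csSup_eq
  · have hempty : {x : ℝ | ∃ P : Matrix ι ι 𝕜,
        P.IsHermitian ∧ P * P = P ∧ P.rank = m ∧ x = RCLike.re (P * A).trace} = ∅ :=
      Set.eq_empty_of_forall_notMem fun x ⟨P, _, _, hrank, _⟩ => by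
        have := rank_le_card_width P
        omega
    rw [hempty, Real.sSup_empty, topSum_of_card_lt _ hm]

end Matrix.IsHermitian

end Projections

theorem Matrix.IsHermitian.sigDim_eq_sInf_topSum {ι : Type*} [Fintype ι] [DecidableEq ι]
    {A : Matrix ι ι ℂ} (hA : A.IsHermitian) (δ : ℝ) :
    sigDim A δ = sInf {m : ℕ | δ ≤ topSum hA.eigenvalues m} := by
  have hmem : ∀ m, (∃ P : Matrix ι ι ℂ, P.IsHermitian ∧ P * P = P ∧
      δ ≤ ((P * A).trace).re ∧ P.rank = m) ↔ m ≤ Fintype.card ι ∧ δ ≤ topSum hA.eigenvalues m := by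
    intro m
    constructor
    · rintro ⟨P, hherm, hidem, hδ, rfl⟩
      have hm := rank_le_card_width P
      exact ⟨hm, hδ.trans ((hA.isGreatest_re_trace_mul hm).2 ⟨P, hherm, hidem, rfl, rfl⟩)⟩
    · rintro ⟨hm, hδ⟩
      obtain ⟨P, hherm, hidem, hrank, htr⟩ := (hA.isGreatest_re_trace_mul hm).1
      exact ⟨P, hherm, hidem, hδ.trans_eq htr, hrank⟩
  rw [sigDim]
  rcases le_or_gt δ 0 with hδ | hδ
  · rw [Nat.sInf_eq_zero.mpr (.inl ((hmem 0).mpr ⟨Nat.zero_le _, by rwa [topSum_zero]⟩)),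
      Nat.sInf_eq_zero.mpr (.inl (by rwa [Set.mem_ofPred_eq, topSum_zero]))]
  · -- beyond `card ι` the top sums vanish, so the bound `m ≤ card ι` is automatic
    congr 1
    ext m
    rw [Set.mem_ofPred_eq, Set.mem_ofPred_eq, hmem]
    refine ⟨And.right, fun h => ⟨not_lt.mp fun hlt => ?_, h⟩⟩
    rw [topSum_of_card_lt _ hlt] at h
    linarith

theorem sigDim_eq_top_eigenvalues_general {ι : Type*} [Fintype ι] [DecidableEq ι]
    (ρ : Matrix ι ι ℂ) (hρ : IsDensity ρ) (δ : ℝ) :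
    sigDim ρ δ = sInf {m : ℕ | δ ≤ topSum hρ.1.isHermitian.eigenvalues m} ∧
    ∀ m : ℕ,
      sSup {x : ℝ | ∃ P : Matrix ι ι ℂ,
          P.IsHermitian ∧ P * P = P ∧ P.rank = m ∧ x = ((P * ρ).trace).re}
        = topSum hρ.1.isHermitian.eigenvalues m :=
  ⟨hρ.1.isHermitian.sigDim_eq_sInf_topSum δ, hρ.1.isHermitian.sSup_re_trace_mul_eq_topSum⟩

/-- `𝒮(ρ,δ)` is the least `m` such that the sum of the `m` largest eigenvalues
of `ρ` is at least `δ`; equivalently, for every `m`, the maximum of `Tr(Pρ)` over rank-`m`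
orthogonal projections `P` equals the sum of the `m` largest eigenvalues of `ρ`. -/
theorem sigDim_eq_top_eigenvalues {ι : Type*} [Fintype ι] [DecidableEq ι] [Nonempty ι]
    (ρ : Matrix ι ι ℂ) (hρ : IsDensity ρ) (δ : ℝ) (hδ0 : 0 ≤ δ) (hδ1 : δ ≤ 1) :
    sigDim ρ δ = sInf {m : ℕ | δ ≤ topSum hρ.1.isHermitian.eigenvalues m} ∧
    ∀ m : ℕ,
      sSup {x : ℝ | ∃ P : Matrix ι ι ℂ,
          P.IsHermitian ∧ P * P = P ∧ P.rank = m ∧ x = ((P * ρ).trace).re}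
        = topSum hρ.1.isHermitian.eigenvalues m :=
  sigDim_eq_top_eigenvalues_general ρ hρ δ
end

section
/- Let p : Fin d → ℝ be a probability vector (pᵢ ≥ 0, ∑ᵢ pᵢ = 1), define H = −∑ᵢ pᵢ log₂ pᵢ and α = √(∑ᵢ pᵢ (log₂ pᵢ + H)²) (with the convention 0·log₂0 = 0), and assume α > 0. Then there exist constants δ < 1, C > 0 and n₀ ∈ ℕ such that for all n ≥ n₀, every finite set T of multi-indices i : Fin n → Fin d satisfying ∑_{i∈T} ∏ₖ p(i k) ≥ δ has cardinality |T| > C · 2^{nH + α√n}. -/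
/-! Write `u j = -(log₂ p j + H)` for the centred surprisal, so that
`∏ k, p (i k) ≤ 2 ^ -(n H + ∑ k, u (i k))`. If the tail event `α √n ≤ ∑ k, u (i k)` has
probability at least `γ` for all large `n`, a set of probability at least `1 - γ / 2` carries
probability `γ / 2` inside it, on points of probability at most `2 ^ -(n H + α √n)`, and so has at
least `γ / 2 · 2 ^ (n H + α √n)` elements.

The tail lies one standard deviation out, where Chebyshev's inequality for `p` says nothing.
Tilting `p` to `p j e^(τ u j)` with `τ = 12 / (α √n)` moves the mean of `∑ k, u (i k)` to some
`n μ ∈ [3 α √n, 18 α √n]` and keeps its variance at most `2 n α²`, so under the tilt the window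
`|∑ k, u (i k) - n μ| < 2 α √n` has mass at least `1 / 2`. The window lies in the tail event and
on it `p` is at least `e^(-240)` times the tilt, whence `γ = e^(-240) / 2`. -/

open scoped BigOperators Classical ComplexOrder

open Finset Real

lemma mul_exp_sub_one_mem_Icc {x : ℝ} (hx : |x| ≤ 1 / 2) :
    x * (exp x - 1) ∈ Set.Icc (x ^ 2 / 2) (3 * x ^ 2 / 2) := by
  have h := abs_exp_sub_one_sub_id_le (hx.trans (by norm_num))
  have hcube : |x * (exp x - 1 - x)| ≤ x ^ 2 / 2 := by
    rw [abs_mul]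
    nlinarith [abs_nonneg x, abs_nonneg (exp x - 1 - x), sq_abs x]
  constructor <;> nlinarith [abs_le.1 hcube]

lemma exp_le_two {x : ℝ} (hx : |x| ≤ 1 / 2) : exp x ≤ 2 := by
  have h := abs_exp_sub_one_sub_id_le (hx.trans (by norm_num))
  nlinarith [abs_le.1 h, abs_le.1 hx, sq_abs x]


section Tilt

variable {ι : Type*} {p u : ι → ℝ} {τ : ℝ}

noncomputable def tilt (p u : ι → ℝ) (τ : ℝ) (j : ι) : ℝ := p j * exp (τ * u j)

lemma tilt_nonneg (hp0 : ∀ j, 0 ≤ p j) (j : ι) : 0 ≤ tilt p u τ j :=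
  mul_nonneg (hp0 j) (exp_pos _).le

lemma tilt_le_two_mul (hp0 : ∀ j, 0 ≤ p j) (hτu : ∀ j, |τ * u j| ≤ 1 / 2) (j : ι) :
    tilt p u τ j ≤ 2 * p j := by
  rw [tilt, mul_comm 2]
  exact mul_le_mul_of_nonneg_left (exp_le_two (hτu j)) (hp0 j)

lemma prod_eq_prod_tilt_mul_exp {n : ℕ} (i : Fin n → ι) :
    ∏ k, p (i k) = (∏ k, tilt p u τ (i k)) * exp (-(τ * ∑ k, u (i k))) := by
  simp only [tilt, prod_mul_distrib, mul_sum, exp_neg, exp_sum, mul_assoc]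
  rw [mul_inv_cancel₀ (prod_ne_zero_iff.2 fun k _ => exp_ne_zero _), mul_one]

variable [Fintype ι]

noncomputable def tiltMean (p u : ι → ℝ) (τ : ℝ) : ℝ :=
  (∑ j, tilt p u τ j * u j) / ∑ j, tilt p u τ j

lemma one_le_sum_tilt (hp0 : ∀ j, 0 ≤ p j) (hp1 : ∑ j, p j = 1) (hu : ∑ j, p j * u j = 0) :
    1 ≤ ∑ j, tilt p u τ j :=
  calc 1 = ∑ j, p j * (1 + τ * u j) := by
        simp only [mul_add, mul_one, sum_add_distrib, hp1, mul_left_comm _ τ, ← mul_sum, hu]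
        ring
    _ ≤ ∑ j, tilt p u τ j := sum_le_sum fun j _ =>
        mul_le_mul_of_nonneg_left (by linarith [add_one_le_exp (τ * u j)]) (hp0 j)

lemma tiltMean_mul_sum_tilt (hp0 : ∀ j, 0 ≤ p j) (hp1 : ∑ j, p j = 1)
    (hu : ∑ j, p j * u j = 0) :
    tiltMean p u τ * ∑ j, tilt p u τ j = ∑ j, tilt p u τ j * u j :=
  div_mul_cancel₀ _ (one_pos.trans_le (one_le_sum_tilt hp0 hp1 hu)).ne'

lemma sum_tilt_mul_sub_tiltMean (hp0 : ∀ j, 0 ≤ p j) (hp1 : ∑ j, p j = 1)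
    (hu : ∑ j, p j * u j = 0) :
    ∑ j, tilt p u τ j * (u j - tiltMean p u τ) = 0 := by
  simp only [mul_sub, sum_sub_distrib, ← sum_mul, ← tiltMean_mul_sum_tilt hp0 hp1 hu]
  ring

lemma sum_tilt_mul_sub_tiltMean_sq_le (hp0 : ∀ j, 0 ≤ p j) (hp1 : ∑ j, p j = 1)
    (hu : ∑ j, p j * u j = 0) (hτu : ∀ j, |τ * u j| ≤ 1 / 2) :
    ∑ j, tilt p u τ j * (u j - tiltMean p u τ) ^ 2 ≤ 2 * ∑ j, p j * u j ^ 2 := by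
  set μ := tiltMean p u τ
  have hexpand : ∑ j, tilt p u τ j * (u j - μ) ^ 2 + μ ^ 2 * ∑ j, tilt p u τ j
      = ∑ j, tilt p u τ j * u j ^ 2 := by
    have hsq : ∀ j, tilt p u τ j * (u j - μ) ^ 2
        = tilt p u τ j * u j ^ 2 - 2 * μ * (tilt p u τ j * u j) + μ ^ 2 * tilt p u τ j :=
      fun j => by ring
    simp only [hsq, sum_add_distrib, sum_sub_distrib, ← mul_sum,
      ← tiltMean_mul_sum_tilt hp0 hp1 hu]
    ring
  have hsecond : ∑ j, tilt p u τ j * u j ^ 2 ≤ 2 * ∑ j, p j * u j ^ 2 := by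
    rw [mul_sum]
    exact sum_le_sum fun j _ => by nlinarith [tilt_le_two_mul hp0 hτu j, sq_nonneg (u j)]
  nlinarith [sq_nonneg μ, one_le_sum_tilt (τ := τ) hp0 hp1 hu]

lemma mul_tiltMean_mem_Icc (hp0 : ∀ j, 0 ≤ p j) (hp1 : ∑ j, p j = 1)
    (hu : ∑ j, p j * u j = 0) (hτu : ∀ j, |τ * u j| ≤ 1 / 2) :
    τ * tiltMean p u τ ∈
      Set.Icc (τ ^ 2 / 4 * ∑ j, p j * u j ^ 2) (3 * τ ^ 2 / 2 * ∑ j, p j * u j ^ 2) := by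
  set Z := ∑ j, tilt p u τ j
  have hcentre : τ * tiltMean p u τ * Z = ∑ j, p j * ((τ * u j) * (exp (τ * u j) - 1)) := by
    have : ∑ j, p j * ((τ * u j) * (exp (τ * u j) - 1))
        = τ * ∑ j, tilt p u τ j * u j - τ * ∑ j, p j * u j := by
      simp only [mul_sum, ← sum_sub_distrib, tilt]
      exact sum_congr rfl fun j _ => by ring
    rw [this, hu, mul_zero, sub_zero, mul_assoc, tiltMean_mul_sum_tilt hp0 hp1 hu]
  have hx := fun j => mul_exp_sub_one_mem_Icc (hτu j)
  have hlow : τ ^ 2 / 2 * ∑ j, p j * u j ^ 2 ≤ τ * tiltMean p u τ * Z := by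
    rw [hcentre, mul_sum]
    exact sum_le_sum fun j _ => by nlinarith [(hx j).1, hp0 j]
  have hup : τ * tiltMean p u τ * Z ≤ 3 * τ ^ 2 / 2 * ∑ j, p j * u j ^ 2 := by
    rw [hcentre, mul_sum]
    exact sum_le_sum fun j _ => by nlinarith [(hx j).2, hp0 j]
  have hZ1 : 1 ≤ Z := one_le_sum_tilt hp0 hp1 hu
  have hZ2 : Z ≤ 2 :=
    calc Z ≤ ∑ j, 2 * p j := sum_le_sum fun j _ => tilt_le_two_mul hp0 hτu j
      _ = 2 := by rw [← mul_sum, hp1, mul_one]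
  have hV : 0 ≤ ∑ j, p j * u j ^ 2 := sum_nonneg fun j _ => mul_nonneg (hp0 j) (sq_nonneg _)
  have hτμ0 : 0 ≤ τ * tiltMean p u τ := nonneg_of_mul_nonneg_left
    ((by positivity : (0 : ℝ) ≤ τ ^ 2 / 2 * ∑ j, p j * u j ^ 2).trans hlow) (by positivity)
  constructor
  · nlinarith [mul_le_mul_of_nonneg_left hZ2 hτμ0]
  · nlinarith [mul_le_mul_of_nonneg_left hZ1 hτμ0]

end Tilt

lemma sq_mul_sum_filter_le_sum_mul_sq {α : Type*} [Fintype α] {W : α → ℝ}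
    (hW : ∀ a, 0 ≤ W a) (f : α → ℝ) {r : ℝ} (hr : 0 ≤ r) :
    r ^ 2 * ∑ a with r ≤ |f a|, W a ≤ ∑ a, W a * f a ^ 2 :=
  calc r ^ 2 * ∑ a with r ≤ |f a|, W a ≤ ∑ a with r ≤ |f a|, W a * f a ^ 2 := by
        rw [mul_sum]
        refine sum_le_sum fun a ha => ?_
        have h : r ^ 2 ≤ f a ^ 2 := sq_abs (f a) ▸ pow_le_pow_left₀ hr (mem_filter.1 ha).2 2
        nlinarith [hW a]
    _ ≤ ∑ a, W a * f a ^ 2 :=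
        sum_le_sum_of_subset_of_nonneg (filter_subset _ _) fun a _ _ =>
          mul_nonneg (hW a) (sq_nonneg _)

section ProductWeights

variable {ι : Type*} [Fintype ι] {n : ℕ} {w t : ι → ℝ}

lemma sum_prod_mul_mul_eq (hwt : ∑ j, w j * t j = 0) (k l : Fin n) :
    ∑ i : Fin n → ι, (∏ m, w (i m)) * (t (i k) * t (i l))
      = if k = l then (∑ j, w j * t j ^ 2) * (∑ j, w j) ^ (n - 1) else 0 := by
  have hfactor : ∀ i : Fin n → ι, (∏ m, w (i m)) * (t (i k) * t (i l))
      = ∏ m, w (i m) * ((if m = k then t (i m) else 1) * (if m = l then t (i m) else 1)) := by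
    intro i
    simp only [prod_mul_distrib, prod_ite_eq', mem_univ, if_true]
  simp_rw [hfactor]
  rw [← Fintype.prod_sum fun m j => w j * ((if m = k then t j else 1) * (if m = l then t j else 1))]
  split_ifs with hkl
  · subst hkl
    have hrest : ∀ m ∈ ({k}ᶜ : Finset (Fin n)),
        ∑ j, w j * ((if m = k then t j else 1) * (if m = k then t j else 1)) = ∑ j, w j :=
      fun m hm => by simp [by simpa using hm]
    rw [Fintype.prod_eq_mul_prod_compl k, prod_congr rfl hrest]
    simp [sq, card_compl]
  · exact prod_eq_zero (mem_univ k) (by simpa [hkl, Ne.symm hkl] using hwt)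

lemma sum_prod_mul_sum_sq (hwt : ∑ j, w j * t j = 0) :
    ∑ i : Fin n → ι, (∏ k, w (i k)) * (∑ k, t (i k)) ^ 2
      = n * (∑ j, w j * t j ^ 2) * (∑ j, w j) ^ (n - 1) := by
  calc _ = ∑ k, ∑ l, ∑ i : Fin n → ι, (∏ m, w (i m)) * (t (i k) * t (i l)) := by
        simp only [sq, sum_mul_sum]
        simp only [mul_sum]
        rw [sum_comm]
        exact sum_congr rfl fun k _ => sum_comm
    _ = n * (∑ j, w j * t j ^ 2) * (∑ j, w j) ^ (n - 1) := by
        simp [sum_prod_mul_mul_eq hwt, mul_assoc]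

lemma pow_sub_le_sum_prod_filter_abs_lt (hw : ∀ j, 0 ≤ w j) (hwt : ∑ j, w j * t j = 0)
    {r : ℝ} (hr : 0 < r) :
    (∑ j, w j) ^ n - n * (∑ j, w j * t j ^ 2) * (∑ j, w j) ^ (n - 1) / r ^ 2
      ≤ ∑ i : Fin n → ι with |∑ k, t (i k)| < r, ∏ k, w (i k) := by
  have hW : ∀ i : Fin n → ι, 0 ≤ ∏ k, w (i k) := fun i => prod_nonneg fun k _ => hw (i k)
  have hcheb := sq_mul_sum_filter_le_sum_mul_sq hW (fun i => ∑ k, t (i k)) hr.le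
  rw [sum_prod_mul_sum_sq hwt] at hcheb
  have hsplit := sum_filter_add_sum_filter_not univ
    (fun i : Fin n → ι => |∑ k, t (i k)| < r) fun i => ∏ k, w (i k)
  rw [← Fintype.sum_pow] at hsplit
  simp only [not_lt] at hsplit
  have hbad := (le_div_iff₀' (by positivity : (0 : ℝ) < r ^ 2)).2 hcheb
  linarith

end ProductWeights

lemma one_half_le_sum_prod_tilt_filter_abs_lt {ι : Type*} [Fintype ι] {p u : ι → ℝ} {τ r : ℝ}
    {n : ℕ} (hp0 : ∀ j, 0 ≤ p j) (hp1 : ∑ j, p j = 1) (hu : ∑ j, p j * u j = 0)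
    (hτu : ∀ j, |τ * u j| ≤ 1 / 2) (hr : 0 < r) (hnr : 4 * n * ∑ j, p j * u j ^ 2 ≤ r ^ 2) :
    1 / 2 ≤ ∑ i : Fin n → ι with |∑ k, (u (i k) - tiltMean p u τ)| < r,
      ∏ k, tilt p u τ (i k) := by
  set Z := ∑ j, tilt p u τ j
  have hZ1 : 1 ≤ Z := one_le_sum_tilt hp0 hp1 hu
  have hgood := pow_sub_le_sum_prod_filter_abs_lt (n := n) (tilt_nonneg (τ := τ) hp0)
    (sum_tilt_mul_sub_tiltMean hp0 hp1 hu) hr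
  have hV : 0 ≤ ∑ j, p j * u j ^ 2 := sum_nonneg fun j _ => mul_nonneg (hp0 j) (sq_nonneg _)
  have hchebyshev : n * (∑ j, tilt p u τ j * (u j - tiltMean p u τ) ^ 2) * Z ^ (n - 1) / r ^ 2
      ≤ Z ^ n / 2 := by
    rw [div_le_iff₀ (by positivity)]
    calc n * (∑ j, tilt p u τ j * (u j - tiltMean p u τ) ^ 2) * Z ^ (n - 1)
        ≤ n * (2 * ∑ j, p j * u j ^ 2) * Z ^ n :=
          mul_le_mul (mul_le_mul_of_nonneg_left (sum_tilt_mul_sub_tiltMean_sq_le hp0 hp1 hu hτu)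
            n.cast_nonneg) (pow_le_pow_right₀ hZ1 (Nat.sub_le n 1)) (by positivity)
            (by positivity)
      _ ≤ Z ^ n / 2 * r ^ 2 := by nlinarith [pow_nonneg (zero_le_one.trans hZ1) n]
  linarith [one_le_pow₀ (n := n) hZ1]

theorem tail_mass_ge {ι : Type*} [Fintype ι] {p u : ι → ℝ} {α : ℝ} {n : ℕ}
    (hp0 : ∀ j, 0 ≤ p j) (hp1 : ∑ j, p j = 1) (hu : ∑ j, p j * u j = 0)
    (hα : ∑ j, p j * u j ^ 2 = α ^ 2) (hα0 : 0 < α) (hn : 0 < n)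
    (hun : ∀ j, 24 * |u j| ≤ α * √n) :
    exp (-240) / 2 ≤ ∑ i : Fin n → ι with α * √n ≤ ∑ k, u (i k), ∏ k, p (i k) := by
  have hsqrt : 0 < √(n : ℝ) := by positivity
  set τ := 12 / (α * √n) with hτ
  have hτ0 : 0 < τ := by positivity
  have hτα : τ * (α * √n) = 12 := div_mul_cancel₀ _ (by positivity)
  have hτu : ∀ j, |τ * u j| ≤ 1 / 2 := fun j => by
    rw [abs_mul, abs_of_pos hτ0, hτ, div_mul_eq_mul_div, div_le_iff₀ (by positivity)]
    linarith [hun j]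
  set μ := tiltMean p u τ
  set r := 2 * (α * √n)
  have hhalf := one_half_le_sum_prod_tilt_filter_abs_lt (n := n) hp0 hp1 hu hτu
    (show 0 < r by positivity) (by rw [hα, mul_pow, mul_pow, sq_sqrt n.cast_nonneg]; linarith)
  have hnτ : (n : ℝ) * (τ ^ 2 * α ^ 2) = 144 :=
    calc (n : ℝ) * (τ ^ 2 * α ^ 2) = (τ * (α * √n)) ^ 2 := by
          rw [mul_pow, mul_pow, sq_sqrt n.cast_nonneg]; ring
      _ = 144 := by rw [hτα]; norm_num
  have hτr : τ * r = 24 := by rw [mul_left_comm, hτα]; norm_num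
  have hτμ := mul_tiltMean_mem_Icc hp0 hp1 hu hτu
  rw [hα] at hτμ
  have hwindow : ∀ i : Fin n → ι, |∑ k, (u (i k) - μ)| < r →
      -240 ≤ -(τ * ∑ k, u (i k)) ∧ α * √n ≤ ∑ k, u (i k) := by
    intro i hi
    rw [sum_sub_distrib, sum_const, card_univ, Fintype.card_fin, nsmul_eq_mul] at hi
    have hτμ_low : 36 ≤ n * (τ * μ) := by
      linarith [mul_le_mul_of_nonneg_left hτμ.1 n.cast_nonneg]
    have hτμ_up : n * (τ * μ) ≤ 216 := by
      linarith [mul_le_mul_of_nonneg_left hτμ.2 n.cast_nonneg]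
    have hτdev : |τ * ∑ k, u (i k) - n * (τ * μ)| < 24 := by
      rw [← hτr, show τ * ∑ k, u (i k) - n * (τ * μ) = τ * (∑ k, u (i k) - n * μ) by ring,
        abs_mul, abs_of_pos hτ0]
      exact mul_lt_mul_of_pos_left hi hτ0
    obtain ⟨hτlow, hτup⟩ := abs_lt.1 hτdev
    exact ⟨by linarith, le_of_mul_le_mul_left (by linarith) hτ0⟩
  calc exp (-240) / 2
      ≤ ∑ i : Fin n → ι with |∑ k, (u (i k) - μ)| < r, exp (-240) * ∏ k, tilt p u τ (i k) := by
        rw [← mul_sum]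
        nlinarith [exp_pos (-240)]
    _ ≤ ∑ i : Fin n → ι with |∑ k, (u (i k) - μ)| < r, ∏ k, p (i k) := by
        refine sum_le_sum fun i hi => ?_
        rw [prod_eq_prod_tilt_mul_exp (p := p) (u := u) (τ := τ) i, mul_comm]
        exact mul_le_mul_of_nonneg_left (exp_le_exp.2 (hwindow i (mem_filter.1 hi).2).1)
          (prod_nonneg fun k _ => tilt_nonneg hp0 _)
    _ ≤ ∑ i : Fin n → ι with α * √n ≤ ∑ k, u (i k), ∏ k, p (i k) :=
        sum_le_sum_of_subset_of_nonneg
          (fun i hi => mem_filter.2 ⟨mem_univ i, (hwindow i (mem_filter.1 hi).2).2⟩)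
          fun i _ _ => prod_nonneg fun k _ => hp0 _

lemma sum_add_sum_sub_one_le_card_mul {α : Type*} [Fintype α] {P : α → ℝ} (hP0 : ∀ a, 0 ≤ P a)
    (hP1 : ∑ a, P a = 1) {A : Finset α} {b : ℝ} (hb : 0 ≤ b) (hA : ∀ a ∈ A, P a ≤ b)
    (T : Finset α) : ∑ a ∈ T, P a + ∑ a ∈ A, P a - 1 ≤ #T * b :=
  calc ∑ a ∈ T, P a + ∑ a ∈ A, P a - 1 ≤ ∑ a ∈ T ∩ A, P a := by
        have hunion : ∑ a ∈ T ∪ A, P a ≤ 1 :=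
          hP1 ▸ sum_le_sum_of_subset_of_nonneg (subset_univ _) fun a _ _ => hP0 a
        linarith [sum_union_inter (s₁ := T) (s₂ := A) (f := P)]
    _ ≤ #(T ∩ A) * b := by
        rw [← nsmul_eq_mul]
        exact sum_le_card_nsmul _ _ _ fun a ha => hA a (mem_inter.1 ha).2
    _ ≤ #T * b := by gcongr; exact inter_subset_left

lemma le_rpow_logb {b x : ℝ} (hb : 0 < b) (hb1 : b ≠ 1) (hx : 0 ≤ x) : x ≤ b ^ logb b x := by
  rcases hx.eq_or_lt with rfl | hx
  · exact (rpow_pos_of_pos hb _).le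
  · exact (rpow_logb hb hb1 hx).ge

lemma prod_le_rpow_sum_logb {κ : Type*} (s : Finset κ) {b : ℝ} (hb : 0 < b) (hb1 : b ≠ 1)
    {f : κ → ℝ} (hf : ∀ k ∈ s, 0 ≤ f k) : ∏ k ∈ s, f k ≤ b ^ ∑ k ∈ s, logb b (f k) := by
  rw [rpow_sum_of_pos hb]
  exact prod_le_prod hf fun k hk => le_rpow_logb hb hb1 (hf k hk)

lemma prod_le_two_rpow_of_le_sum {ι : Type*} {n : ℕ} {p : ι → ℝ} (hp0 : ∀ j, 0 ≤ p j)
    {H x : ℝ} {i : Fin n → ι} (hx : x ≤ ∑ k, -(logb 2 (p (i k)) + H)) :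
    ∏ k, p (i k) ≤ (2 : ℝ) ^ (-(n * H + x)) := by
  refine (prod_le_rpow_sum_logb univ two_pos (by norm_num) fun k _ => hp0 _).trans
    (rpow_le_rpow_of_exponent_le one_le_two ?_)
  simp only [neg_add, sum_add_distrib, sum_neg_distrib, sum_const, card_univ,
    Fintype.card_fin, nsmul_eq_mul] at hx
  linarith

theorem high_probability_set_lower_bound_general (d : ℕ)
    (p : Fin d → ℝ) (hp0 : ∀ i, 0 ≤ p i) (hp1 : ∑ i, p i = 1)
    (H α : ℝ)
    (hH : H = -∑ i, p i * Real.logb 2 (p i))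
    (hα : α = Real.sqrt (∑ i, p i * (Real.logb 2 (p i) + H) ^ 2))
    (hαpos : 0 < α) :
    ∃ δ C : ℝ, ∃ n₀ : ℕ, δ < 1 ∧ 0 < C ∧
      ∀ n : ℕ, n₀ ≤ n →
        ∀ T : Finset (Fin n → Fin d),
          δ ≤ ∑ i ∈ T, ∏ k, p (i k) →
          C * (2 : ℝ) ^ ((n : ℝ) * H + α * Real.sqrt n) < (T.card : ℝ) := by
  set u : Fin d → ℝ := fun j => -(logb 2 (p j) + H)
  have hu : ∑ j, p j * u j = 0 := by
    simp only [u, mul_neg, mul_add, sum_neg_distrib, sum_add_distrib, ← sum_mul, hp1, hH]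
    ring
  have hα2 : ∑ j, p j * u j ^ 2 = α ^ 2 := by
    simp only [u, neg_sq]
    rw [hα, sq_sqrt (sum_nonneg fun j _ => mul_nonneg (hp0 j) (sq_nonneg _))]
  set γ := exp (-240) / 2
  have hγ : 0 < γ := by positivity
  refine ⟨1 - γ / 2, γ / 4, ⌈((24 * ∑ l, |u l|) / α) ^ 2⌉₊ + 1, by linarith, by positivity, ?_⟩
  intro n hn T hT
  have hun : ∀ j, 24 * |u j| ≤ α * √n := fun j => by
    have hsqrt : (24 * ∑ l, |u l|) / α ≤ √n := (le_sqrt (by positivity) n.cast_nonneg).2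
      ((Nat.le_ceil _).trans (by exact_mod_cast Nat.le_of_succ_le hn))
    rw [div_le_iff₀ hαpos] at hsqrt
    linarith [single_le_sum (fun j _ => abs_nonneg (u j)) (mem_univ j)]
  have htail : γ ≤ _ := tail_mass_ge hp0 hp1 hu hα2 hαpos (by omega) hun
  set t := (n : ℝ) * H + α * √n
  have hA : ∀ i ∈ univ.filter fun i : Fin n → Fin d => α * √n ≤ ∑ k, u (i k),
      ∏ k, p (i k) ≤ (2 : ℝ) ^ (-t) :=
    fun i hi => prod_le_two_rpow_of_le_sum hp0 (mem_filter.1 hi).2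
  have hcount := sum_add_sum_sub_one_le_card_mul (fun i => prod_nonneg fun k _ => hp0 (i k))
    (by rw [← Fintype.sum_pow, hp1, one_pow]) (by positivity) hA T
  rw [rpow_neg zero_le_two] at hcount
  calc γ / 4 * 2 ^ t < γ / 2 * 2 ^ t := by gcongr; linarith
    _ ≤ #T := (le_mul_inv_iff₀ (by positivity)).1 (by linarith)

/-- classical analog: for a probability vector `p` with entropy `H` and spectral
deviation `α > 0`, there exist `δ < 1`, `C > 0` and `n₀` such that for all `n ≥ n₀`, any set `T`
of multi-indices carrying product probability at least `δ` has `|T| > C · 2^{nH + α√n}`. -/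
theorem high_probability_set_lower_bound (d : ℕ) (hd : 0 < d)
    (p : Fin d → ℝ) (hp0 : ∀ i, 0 ≤ p i) (hp1 : ∑ i, p i = 1)
    (H α : ℝ)
    (hH : H = -∑ i, p i * Real.logb 2 (p i))
    (hα : α = Real.sqrt (∑ i, p i * (Real.logb 2 (p i) + H) ^ 2))
    (hαpos : 0 < α) :
    ∃ δ C : ℝ, ∃ n₀ : ℕ, δ < 1 ∧ 0 < C ∧
      ∀ n : ℕ, n₀ ≤ n →
        ∀ T : Finset (Fin n → Fin d),
          δ ≤ ∑ i ∈ T, ∏ k, p (i k) →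
          C * (2 : ℝ) ^ ((n : ℝ) * H + α * Real.sqrt n) < (T.card : ℝ) :=
  high_probability_set_lower_bound_general d p hp0 hp1 H α hH hα hαpos
end

section
/- Let A and B be nonempty finite types, let ψ : A × B → ℂ be a unit vector in the Euclidean space ℂ^{A×B}, let φ : A → ℂ be a unit vector in ℂ^{A}, and let 0 < ε ≤ 1. If D(Tr_B |ψ⟩⟨ψ|, |φ⟩⟨φ|) < ε, then there exists a unit vector γ : B → ℂ such that D(|ψ⟩⟨ψ|, |φ⊗γ⟩⟨φ⊗γ|) < 2√ε, where (φ⊗γ)(a,b) = φ(a)·γ(b). -/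
open scoped BigOperators Classical ComplexOrder

/-!
Write `v = (⟨φ| ⊗ 1) ψ ∈ ℂ^B`, so that `⟨φ| Tr_B |ψ⟩⟨ψ| |φ⟩ = ‖v‖²`. The quadratic form of a
Hermitian matrix on a unit vector is bounded by the sum of the absolute values of its
eigenvalues, so testing `Tr_B |ψ⟩⟨ψ| - |φ⟩⟨φ|` against `φ` gives `1 - ‖v‖² < ε`. Put
`γ = v / ‖v‖`; then `⟨φ ⊗ γ|ψ⟩ = ‖v‖`.

For unit vectors `u, w` the difference `M = |u⟩⟨u| - |w⟩⟨w|` of two idempotents satisfies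
`M³ = (1 - |⟨w|u⟩|²) M` and `Tr M² = 2 (1 - |⟨w|u⟩|²)`, so its eigenvalues lie in
`{0, ±√(1 - |⟨w|u⟩|²)}` and `D(|u⟩⟨u|, |w⟩⟨w|) = 2 √(1 - |⟨w|u⟩|²)`. With `u = ψ`,
`w = φ ⊗ γ` this is `2 √(1 - ‖v‖²) < 2 √ε`.
-/

open Matrix

lemma star_dotProduct_self_eq_sum_norm_sq {ι : Type*} [Fintype ι] (x : ι → ℂ) :
    star x ⬝ᵥ x = ((∑ i, ‖x i‖ ^ 2 : ℝ) : ℂ) := by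
  simp [dotProduct, Complex.conj_mul']

lemma abs_mul_sqrt_eq_sq_of_pow_three_eq {x c : ℝ} (h : x ^ 3 = c * x) : |x| * √c = x ^ 2 := by
  have : x * (x ^ 2 - c) = 0 := by linear_combination h
  rcases mul_eq_zero.mp this with hx | hc
  · simp [hx]
  · rw [← sub_eq_zero.mp hc, Real.sqrt_sq_eq_abs, ← sq, sq_abs]

namespace Matrix.IsHermitian

variable {ι : Type*} [Fintype ι] [DecidableEq ι] {M : Matrix ι ι ℂ}

lemma exists_star_dotProduct_mulVec_eq_sum (hM : M.IsHermitian) (x : ι → ℂ) :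
    ∃ y : ι → ℂ, ∑ i, ‖y i‖ ^ 2 = ∑ i, ‖x i‖ ^ 2 ∧
      star x ⬝ᵥ M *ᵥ x = ∑ i, (hM.eigenvalues i : ℂ) * ‖y i‖ ^ 2 := by
  set U : Matrix ι ι ℂ := ↑hM.eigenvectorUnitary
  have hU : U * star U = 1 := Unitary.coe_mul_star_self _
  have hstar : star (star U *ᵥ x) = star x ᵥ* U := by
    rw [star_mulVec, ← star_eq_conjTranspose, star_star]
  refine ⟨star U *ᵥ x, ?_, ?_⟩
  · have : star (star U *ᵥ x) ⬝ᵥ (star U *ᵥ x) = star x ⬝ᵥ x := by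
      rw [hstar, ← dotProduct_mulVec, mulVec_mulVec, hU, one_mulVec]
    simpa only [star_dotProduct_self_eq_sum_norm_sq, Complex.ofReal_inj] using this
  · have hMU : M = U * diagonal (RCLike.ofReal ∘ hM.eigenvalues) * star U := hM.spectral_theorem
    conv_lhs => rw [hMU, ← mulVec_mulVec, ← mulVec_mulVec, dotProduct_mulVec, ← hstar]
    simp [dotProduct, mulVec_diagonal, ← Complex.conj_mul', mul_left_comm]

lemma abs_re_star_dotProduct_mulVec_le (hM : M.IsHermitian) {x : ι → ℂ}
    (hx : ∑ i, ‖x i‖ ^ 2 = 1) :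
    |(star x ⬝ᵥ M *ᵥ x).re| ≤ ∑ i, |hM.eigenvalues i| := by
  obtain ⟨y, hy, hxy⟩ := hM.exists_star_dotProduct_mulVec_eq_sum x
  have hre : (star x ⬝ᵥ M *ᵥ x).re = ∑ i, hM.eigenvalues i * ‖y i‖ ^ 2 := by
    rw [hxy]; norm_cast
  have hyi : ∀ i, ‖y i‖ ^ 2 ≤ 1 := fun i =>
    hx ▸ hy ▸ Finset.single_le_sum (fun j _ => sq_nonneg ‖y j‖) (Finset.mem_univ i)
  calc |(star x ⬝ᵥ M *ᵥ x).re| ≤ ∑ i, |hM.eigenvalues i * ‖y i‖ ^ 2| :=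
        hre ▸ Finset.abs_sum_le_sum_abs _ _
    _ ≤ ∑ i, |hM.eigenvalues i| := Finset.sum_le_sum fun i _ => by
        rw [abs_mul, abs_sq]
        exact mul_le_of_le_one_right (abs_nonneg _) (hyi i)

lemma trace_mul_self (hM : M.IsHermitian) :
    (M * M).trace = ∑ i, (hM.eigenvalues i : ℂ) ^ 2 := by
  set U : Matrix ι ι ℂ := ↑hM.eigenvectorUnitary
  have hMU : M = U * diagonal (RCLike.ofReal ∘ hM.eigenvalues) * star U := hM.spectral_theorem
  have hUU : star U * U = 1 := Unitary.coe_star_mul_self _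
  have hcancel : ∀ X, star U * (U * X) = X := fun X => by
    rw [← Matrix.mul_assoc, hUU, Matrix.one_mul]
  conv_lhs => rw [hMU]
  simp only [Matrix.mul_assoc, hcancel]
  rw [trace_mul_comm, Matrix.mul_assoc, Matrix.mul_assoc, hUU, Matrix.mul_one,
    diagonal_mul_diagonal, trace_diagonal]
  simp [sq]

lemma eigenvalues_pow_three {c : ℝ} (hM : M.IsHermitian) (hc : M * M * M = c • M) (i : ι) :
    hM.eigenvalues i ^ 3 = c * hM.eigenvalues i := by
  have hv : (hM.eigenvectorBasis i).ofLp ≠ 0 := by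
    simpa using hM.eigenvectorBasis.orthonormal.ne_zero i
  have := congrArg (· *ᵥ (hM.eigenvectorBasis i).ofLp) hc
  simp only [← mulVec_mulVec, smul_mulVec, hM.mulVec_eigenvectorBasis, mulVec_smul,
    smul_smul] at this
  rw [← sub_eq_zero, ← sub_smul, smul_eq_zero] at this
  linear_combination this.resolve_right hv

lemma sum_abs_eigenvalues_eq_two_mul_sqrt {c : ℝ} (hM : M.IsHermitian)
    (hcube : M * M * M = c • M) (htr : (M * M).trace = 2 * c) :
    ∑ i, |hM.eigenvalues i| = 2 * √c := by
  have hsq : ∑ i, hM.eigenvalues i ^ 2 = 2 * c := by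
    rw [hM.trace_mul_self] at htr
    exact_mod_cast htr
  have hc : 0 ≤ c := by
    nlinarith [Finset.sum_nonneg fun i (_ : i ∈ Finset.univ) => sq_nonneg (hM.eigenvalues i)]
  rcases hc.eq_or_lt with rfl | hc
  · have hzero : ∀ i, hM.eigenvalues i = 0 := fun i => by
      simpa using hM.eigenvalues_pow_three hcube i
    simp [hzero]
  · have hsqrt : 0 < √c := Real.sqrt_pos.mpr hc
    have key : (∑ i, |hM.eigenvalues i|) * √c = (2 * √c) * √c := by
      rw [Finset.sum_mul, mul_assoc, Real.mul_self_sqrt hc.le, ← hsq]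
      exact Finset.sum_congr rfl fun i _ =>
        abs_mul_sqrt_eq_sq_of_pow_three_eq (hM.eigenvalues_pow_three hcube i)
    exact mul_right_cancel₀ hsqrt.ne' key

end Matrix.IsHermitian

theorem IsIdempotentElem.sub_mul_sub_mul_sub {K R : Type*} [CommRing K] [Ring R] [Algebra K R]
    {P Q : R} {a : K} (hP : IsIdempotentElem P) (hQ : IsIdempotentElem Q)
    (hPQP : P * Q * P = a • P) (hQPQ : Q * P * Q = a • Q) :
    (P - Q) * (P - Q) * (P - Q) = (1 - a) • (P - Q) := by
  calc (P - Q) * (P - Q) * (P - Q)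
      = P * P * P - P * P * Q - P * Q * P + P * Q * Q - Q * P * P + Q * P * Q
          + Q * Q * P - Q * Q * Q := by noncomm_ring
    _ = P - P * Q * P + Q * P * Q - Q := by
        simp only [hP.eq, hQ.eq, mul_assoc]; abel
    _ = (1 - a) • (P - Q) := by rw [hPQP, hQPQ]; module

lemma outer_eq_vecMulVec {ι : Type*} (u : ι → ℂ) : outer u = vecMulVec u (star u) := rfl

lemma outer_isHermitian {ι : Type*} (u : ι → ℂ) : (outer u).IsHermitian := by
  ext i j
  simp [outer, mul_comm]

section Outer

variable {ι : Type*} [Fintype ι]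

lemma trace_outer (u : ι → ℂ) : (outer u).trace = ((∑ i, ‖u i‖ ^ 2 : ℝ) : ℂ) := by
  rw [outer_eq_vecMulVec, trace_vecMulVec, dotProduct_comm, star_dotProduct_self_eq_sum_norm_sq]

lemma outer_mul_outer (u w : ι → ℂ) :
    outer u * outer w = (star u ⬝ᵥ w) • vecMulVec u (star w) := by
  rw [outer_eq_vecMulVec, outer_eq_vecMulVec, vecMulVec_mul_vecMulVec, vecMulVec_smul]

lemma isIdempotentElem_outer {u : ι → ℂ} (hu : ∑ i, ‖u i‖ ^ 2 = 1) :
    IsIdempotentElem (outer u) := by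
  rw [IsIdempotentElem, outer_mul_outer, star_dotProduct_self_eq_sum_norm_sq, hu,
    Complex.ofReal_one, one_smul, outer_eq_vecMulVec]

lemma outer_mulVec_self {u : ι → ℂ} (hu : ∑ i, ‖u i‖ ^ 2 = 1) : outer u *ᵥ u = u := by
  rw [outer_eq_vecMulVec, vecMulVec_mulVec, star_dotProduct_self_eq_sum_norm_sq, hu,
    Complex.ofReal_one, MulOpposite.op_one, one_smul]

lemma trace_outer_mul_outer (u w : ι → ℂ) :
    (outer u * outer w).trace = (‖star w ⬝ᵥ u‖ : ℂ) ^ 2 := by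
  rw [outer_mul_outer, trace_smul, trace_vecMulVec, dotProduct_comm u, star_dotProduct u,
    smul_eq_mul, Complex.star_def, Complex.conj_mul']

lemma outer_mul_outer_mul_outer (u w : ι → ℂ) :
    outer u * outer w * outer u = ‖star w ⬝ᵥ u‖ ^ 2 • outer u := by
  rw [outer_mul_outer, smul_mul_assoc, outer_eq_vecMulVec, vecMulVec_mul_vecMulVec,
    vecMulVec_smul, smul_smul, star_dotProduct u, Complex.star_def, Complex.conj_mul',
    ← Complex.ofReal_pow, Complex.coe_smul]

lemma traceDist_eq_sum_abs_eigenvalues [DecidableEq ι] {ρ σ : Matrix ι ι ℂ}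
    (h : (ρ - σ).IsHermitian) : traceDist ρ σ = ∑ i, |h.eigenvalues i| :=
  dif_pos h

theorem traceDist_outer_outer [DecidableEq ι] {u w : ι → ℂ} (hu : ∑ i, ‖u i‖ ^ 2 = 1)
    (hw : ∑ i, ‖w i‖ ^ 2 = 1) :
    traceDist (outer u) (outer w) = 2 * √(1 - ‖star w ⬝ᵥ u‖ ^ 2) := by
  have hM := (outer_isHermitian u).sub (outer_isHermitian w)
  have hs : ‖star u ⬝ᵥ w‖ = ‖star w ⬝ᵥ u‖ := by rw [star_dotProduct u, norm_star]
  rw [traceDist_eq_sum_abs_eigenvalues hM]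
  refine hM.sum_abs_eigenvalues_eq_two_mul_sqrt ?_ ?_
  · exact (isIdempotentElem_outer hu).sub_mul_sub_mul_sub (isIdempotentElem_outer hw)
      (outer_mul_outer_mul_outer u w) (hs ▸ outer_mul_outer_mul_outer w u)
  · rw [sub_mul, mul_sub, mul_sub, (isIdempotentElem_outer hu).eq,
      (isIdempotentElem_outer hw).eq, trace_sub, trace_sub, trace_sub, trace_mul_comm (outer w),
      trace_outer_mul_outer, trace_outer, trace_outer, hu, hw]
    push_cast
    ring

end Outer

lemma exists_unit_star_dotProduct_eq_sqrt {ι : Type*} [Fintype ι] {v : ι → ℂ}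
    (hv : 0 < ∑ i, ‖v i‖ ^ 2) :
    ∃ γ : ι → ℂ, ∑ i, ‖γ i‖ ^ 2 = 1 ∧ star γ ⬝ᵥ v = √(∑ i, ‖v i‖ ^ 2) := by
  set F := ∑ i, ‖v i‖ ^ 2
  have hsqrt : 0 < √F := Real.sqrt_pos.mpr hv
  refine ⟨(√F)⁻¹ • v, ?_, ?_⟩
  · simp only [Pi.smul_apply, norm_smul, mul_pow, ← Finset.mul_sum, Real.norm_eq_abs,
      abs_inv, abs_of_pos hsqrt, inv_pow, Real.sq_sqrt hv.le]
    exact inv_mul_cancel₀ hv.ne'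
  · rw [star_smul, smul_dotProduct, star_trivial, star_dotProduct_self_eq_sum_norm_sq,
      ← Complex.coe_smul, smul_eq_mul, ← Complex.ofReal_mul, inv_mul_eq_div, Real.div_sqrt]

section PartialTrace

variable {A B : Type*} [Fintype B]

noncomputable def partialInner [Fintype A] (φ : A → ℂ) (ψ : A × B → ℂ) : B → ℂ :=
  fun b => ∑ a, star (φ a) * ψ (a, b)

lemma ptraceB_outer_isHermitian (ψ : A × B → ℂ) : (ptraceB (outer ψ)).IsHermitian := by
  ext a a'
  simp [ptraceB, outer, mul_comm]

lemma star_dotProduct_ptraceB_outer_mulVec [Fintype A] (φ : A → ℂ) (ψ : A × B → ℂ) :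
    star φ ⬝ᵥ ptraceB (outer ψ) *ᵥ φ = star (partialInner φ ψ) ⬝ᵥ partialInner φ ψ := by
  simp only [dotProduct, mulVec, ptraceB, outer, partialInner, of_apply, Pi.star_apply,
    star_sum, star_mul', Finset.mul_sum, Finset.sum_mul, Complex.star_def, Complex.conj_conj]
  rw [Finset.sum_congr rfl fun a _ => Finset.sum_comm, Finset.sum_comm]
  exact Finset.sum_congr rfl fun _ _ => Finset.sum_congr rfl fun _ _ =>
    Finset.sum_congr rfl fun _ _ => by ring

lemma star_dotProduct_tmul [Fintype A] (φ : A → ℂ) (γ : B → ℂ) (ψ : A × B → ℂ) :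
    star (fun ab => φ ab.1 * γ ab.2) ⬝ᵥ ψ = star γ ⬝ᵥ partialInner φ ψ := by
  simp only [dotProduct, partialInner, Fintype.sum_prod_type, Pi.star_apply, star_mul',
    Finset.mul_sum]
  exact Finset.sum_comm.trans
    (Finset.sum_congr rfl fun _ _ => Finset.sum_congr rfl fun _ _ => by ring)

lemma sum_norm_sq_tmul [Fintype A] (φ : A → ℂ) (γ : B → ℂ) :
    ∑ ab : A × B, ‖φ ab.1 * γ ab.2‖ ^ 2 = (∑ a, ‖φ a‖ ^ 2) * ∑ b, ‖γ b‖ ^ 2 := by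
  simp [Fintype.sum_prod_type, mul_pow, Finset.sum_mul_sum]

lemma one_sub_le_traceDist_ptraceB_outer [Fintype A] [DecidableEq A] {φ : A → ℂ}
    (hφ : ∑ a, ‖φ a‖ ^ 2 = 1) (ψ : A × B → ℂ) :
    1 - ∑ b, ‖partialInner φ ψ b‖ ^ 2 ≤ traceDist (ptraceB (outer ψ)) (outer φ) := by
  have hM := (ptraceB_outer_isHermitian ψ).sub (outer_isHermitian φ)
  have hquad : star φ ⬝ᵥ (ptraceB (outer ψ) - outer φ) *ᵥ φ
      = ((∑ b, ‖partialInner φ ψ b‖ ^ 2 - 1 : ℝ) : ℂ) := by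
    rw [sub_mulVec, dotProduct_sub, star_dotProduct_ptraceB_outer_mulVec, outer_mulVec_self hφ,
      star_dotProduct_self_eq_sum_norm_sq, star_dotProduct_self_eq_sum_norm_sq, hφ]
    push_cast
    ring
  have hbound := hM.abs_re_star_dotProduct_mulVec_le hφ
  rw [hquad, Complex.ofReal_re] at hbound
  rw [traceDist_eq_sum_abs_eigenvalues hM]
  linarith [neg_abs_le (∑ b, ‖partialInner φ ψ b‖ ^ 2 - 1)]

end PartialTrace

theorem exists_product_approx_of_reduced_near_pure_general {A B : Type*}
    [Fintype A] [DecidableEq A] [Fintype B] [DecidableEq B]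
    (ψ : A × B → ℂ) (hψ : ∑ ab, ‖ψ ab‖ ^ 2 = 1)
    (φ : A → ℂ) (hφ : ∑ a, ‖φ a‖ ^ 2 = 1)
    (ε : ℝ) (hε0 : 0 < ε) (hε1 : ε ≤ 1)
    (hD : traceDist (ptraceB (outer ψ)) (outer φ) < ε) :
    ∃ γ : B → ℂ, (∑ b, ‖γ b‖ ^ 2 = 1) ∧
      traceDist (outer ψ) (outer fun ab => φ ab.1 * γ ab.2) < 2 * Real.sqrt ε := by
  have hfid : 1 - ∑ b, ‖partialInner φ ψ b‖ ^ 2 < ε :=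
    (one_sub_le_traceDist_ptraceB_outer hφ ψ).trans_lt hD
  obtain ⟨γ, hγ, hγψ⟩ := exists_unit_star_dotProduct_eq_sqrt (v := partialInner φ ψ)
    (by linarith)
  have hφγ : ∑ ab : A × B, ‖φ ab.1 * γ ab.2‖ ^ 2 = 1 := by
    rw [sum_norm_sq_tmul, hφ, hγ, one_mul]
  refine ⟨γ, hγ, ?_⟩
  rw [traceDist_outer_outer hψ hφγ, star_dotProduct_tmul, hγψ, Complex.norm_real,
    Real.norm_eq_abs, sq_abs, Real.sq_sqrt (Finset.sum_nonneg fun b _ => sq_nonneg _)]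
  exact mul_lt_mul_of_pos_left ((Real.sqrt_lt_sqrt_iff_of_pos hε0).mpr hfid) two_pos

/-- near-pure reduced states: if the reduced state of the pure state `ψ` on `A×B`
is within trace distance `ε` of the pure state `φ` on `A`, then `ψ` is within trace distance
`2√ε` of a product state `φ ⊗ γ` for some unit vector `γ` on `B`. -/
theorem exists_product_approx_of_reduced_near_pure {A B : Type*}
    [Fintype A] [DecidableEq A] [Nonempty A] [Fintype B] [DecidableEq B] [Nonempty B]
    (ψ : A × B → ℂ) (hψ : ∑ ab, ‖ψ ab‖ ^ 2 = 1)
    (φ : A → ℂ) (hφ : ∑ a, ‖φ a‖ ^ 2 = 1)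
    (ε : ℝ) (hε0 : 0 < ε) (hε1 : ε ≤ 1)
    (hD : traceDist (ptraceB (outer ψ)) (outer φ) < ε) :
    ∃ γ : B → ℂ, (∑ b, ‖γ b‖ ^ 2 = 1) ∧
      traceDist (outer ψ) (outer fun ab => φ ab.1 * γ ab.2) < 2 * Real.sqrt ε :=
  exists_product_approx_of_reduced_near_pure_general ψ hψ φ hφ ε hε0 hε1 hD
end

section
/- Let ρ be a density matrix on a nonempty finite type ι with entropy E and spectral constants α and β as in the context, and assume α > 0. Then there exist constants δ < 1, C > 0 and n₀ ∈ ℕ such that for all n ≥ n₀, every nonempty finite type B, and every unit vector ψ : ((Fin n → ι) × B) → ℂ with D(Tr_B |ψ⟩⟨ψ|, ρ^{⊗n}) ≤ 2(1−δ), the Schmidt rank of ψ, i.e. rank(Tr_B |ψ⟩⟨ψ|), is greater than C · 2^{nE + α√n}. -/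
open scoped BigOperators Classical ComplexOrder

noncomputable def lg (x : ℝ) : ℝ := (1 + Real.exp (-x))⁻¹
noncomputable def lg1 (x : ℝ) : ℝ := Real.exp (-x) * ((1 + Real.exp (-x))⁻¹)^2
noncomputable def lg2 (x : ℝ) : ℝ :=
  -(Real.exp (-x)) * ((1 + Real.exp (-x))⁻¹)^2 + 2 * (Real.exp (-x))^2 * ((1 + Real.exp (-x))⁻¹)^3
noncomputable def lg3 (x : ℝ) : ℝ :=
  Real.exp (-x) * ((1+Real.exp (-x))⁻¹)^2 - 6 * (Real.exp (-x))^2 * ((1+Real.exp (-x))⁻¹)^3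
    + 6 * (Real.exp (-x))^3 * ((1+Real.exp (-x))⁻¹)^4

lemma expD_pos (x : ℝ) : (0:ℝ) < 1 + Real.exp (-x) := by positivity
lemma expD_ne (x : ℝ) : (1 + Real.exp (-x)) ≠ 0 := ne_of_gt (expD_pos x)

lemma hasDerivAt_expneg (x : ℝ) : HasDerivAt (fun x : ℝ => Real.exp (-x)) (-Real.exp (-x)) x := by
  simpa [Function.comp_def] using (Real.hasDerivAt_exp (-x)).comp x (hasDerivAt_neg x)

lemma hasDerivAt_D (x : ℝ) : HasDerivAt (fun x : ℝ => 1 + Real.exp (-x)) (-Real.exp (-x)) x :=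
  (hasDerivAt_expneg x).const_add 1

lemma hasDerivAt_lg (x : ℝ) : HasDerivAt lg (lg1 x) x := by
  have h := (hasDerivAt_D x).inv (expD_ne x)
  refine h.congr_deriv ?_
  unfold lg1
  field_simp

lemma hasDerivAt_lg1 (x : ℝ) : HasDerivAt lg1 (lg2 x) x := by
  have h := (hasDerivAt_expneg x).mul (((hasDerivAt_D x).inv (expD_ne x)).pow 2)
  refine h.congr_deriv ?_
  simp only [Pi.inv_apply, Pi.pow_apply, Pi.neg_apply, Pi.mul_apply]
  norm_num
  have hD := expD_ne x
  unfold lg2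
  field_simp

lemma hasDerivAt_lg2 (x : ℝ) : HasDerivAt lg2 (lg3 x) x := by
  have h := (((hasDerivAt_expneg x).neg).mul (((hasDerivAt_D x).inv (expD_ne x)).pow 2)).add
    (((((hasDerivAt_expneg x).pow 2)).const_mul 2).mul (((hasDerivAt_D x).inv (expD_ne x)).pow 3))
  refine h.congr_deriv ?_
  simp only [Pi.inv_apply, Pi.pow_apply, Pi.neg_apply, Pi.mul_apply]
  norm_num
  have hD := expD_ne x
  unfold lg3
  field_simp
  ring

lemma lg3_bound (x : ℝ) : |lg3 x| ≤ 13 := by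
  set e := Real.exp (-x) with he
  set i := (1 + Real.exp (-x))⁻¹ with hi
  have he0 : 0 ≤ e := Real.exp_nonneg _
  have hi0 : 0 ≤ i := le_of_lt (by rw [hi]; exact inv_pos.mpr (expD_pos x))
  have hi1 : i ≤ 1 := by
    rw [hi]
    exact inv_le_one_of_one_le₀ (by linarith)
  have hei : e * i ≤ 1 := by
    rw [hi]
    rw [mul_inv_le_iff₀ (expD_pos x)]
    linarith
  have h1 : e * i^2 ≤ 1 := by nlinarith
  have hei0 : 0 ≤ e * i := mul_nonneg he0 hi0
  have h2 : e^2 * i^3 ≤ 1 := by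
    have : e^2 * i^3 = (e*i)^2 * i := by ring
    rw [this]; nlinarith
  have h3 : e^3 * i^4 ≤ 1 := by
    have : e^3 * i^4 = (e*i)^3 * i := by ring
    rw [this]; nlinarith
  have h1' : 0 ≤ e * i^2 := by positivity
  have h2' : 0 ≤ e^2 * i^3 := by positivity
  have h3' : 0 ≤ e^3 * i^4 := by positivity
  rw [abs_le]
  unfold lg3
  rw [← he, ← hi]
  constructor <;> nlinarith

lemma lg_nonneg (x : ℝ) : 0 ≤ lg x := le_of_lt (inv_pos.mpr (expD_pos x))
lemma lg_le_one (x : ℝ) : lg x ≤ 1 := inv_le_one_of_one_le₀ (by have := Real.exp_nonneg (-x); linarith)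
lemma lg_mono {x y : ℝ} (h : x ≤ y) : lg x ≤ lg y := by
  unfold lg
  have : Real.exp (-y) ≤ Real.exp (-x) := Real.exp_le_exp.mpr (by linarith)
  exact inv_anti₀ (expD_pos y) (by linarith)

lemma exp5 : (148:ℝ) ≤ Real.exp 5 := by
  have h := Real.exp_one_gt_d9
  have h5 : (2.7182818283:ℝ)^(5:ℕ) ≤ (Real.exp 1)^(5:ℕ) := by
    apply pow_le_pow_left₀ (by norm_num) (le_of_lt h)
  have : Real.exp 5 = (Real.exp 1)^(5:ℕ) := by
    rw [← Real.exp_nat_mul]; norm_num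
  rw [this]
  nlinarith [h5]

lemma lg_neg5 : lg (-5) ≤ 1/148 := by
  unfold lg
  rw [neg_neg]
  have h := exp5
  rw [inv_le_comm₀ (by linarith) (by norm_num)]
  linarith

lemma lg_5 : (1:ℝ) - 1/148 ≤ lg 5 := by
  unfold lg
  have h : Real.exp (-5) ≤ 1/148 := by
    rw [Real.exp_neg]
    rw [inv_le_comm₀ (Real.exp_pos 5) (by norm_num)]
    have := exp5; linarith
  have h0 : 0 ≤ Real.exp (-5) := Real.exp_nonneg _
  rw [le_inv_comm₀ (by linarith) (by positivity)]
  nlinarith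

lemma hasDerivAt_shift {f f' : ℝ → ℝ} (h : ∀ x, HasDerivAt f (f' x) x) (a y : ℝ) :
    HasDerivAt (fun u : ℝ => f (a + u)) (f' (a + y)) y := by
  simpa [Function.comp_def] using (h (a + y)).comp y ((hasDerivAt_id y).const_add a)

/-- Second-order Taylor bound from a global bound on the third derivative. -/
lemma taylor2_bound {g g1 g2 g3 : ℝ → ℝ} (h1 : ∀ x, HasDerivAt g (g1 x) x)
    (h2 : ∀ x, HasDerivAt g1 (g2 x) x) (h3 : ∀ x, HasDerivAt g2 (g3 x) x)
    {K : ℝ} (hK : ∀ x, |g3 x| ≤ K) (a x : ℝ) :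
    |g (a + x) - g a - g1 a * x - g2 a * x^2/2| ≤ K * |x|^3 := by
  have hKnn : 0 ≤ K := le_trans (abs_nonneg _) (hK 0)
  -- Step A : |g2 (a+t) - g2 a| ≤ K * |t|
  have stepA : ∀ t : ℝ, |g2 (a + t) - g2 a| ≤ K * |t| := by
    intro t
    have := Convex.norm_image_sub_le_of_norm_hasDerivWithin_le
      (f := fun t : ℝ => g2 (a + t)) (f' := fun t : ℝ => g3 (a + t)) (s := Set.univ)
      (fun y _ => (hasDerivAt_shift h3 a y).hasDerivWithinAt)
      (fun y _ => by simpa using hK (a+y)) convex_univ (Set.mem_univ 0) (Set.mem_univ t)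
    simpa using this
  -- Step B : |g1 (a+t) - g1 a - g2 a * t| ≤ K * t^2
  have stepB : ∀ t : ℝ, |g1 (a + t) - g1 a - g2 a * t| ≤ K * t^2 := by
    intro t
    have hmem0 : (0:ℝ) ∈ Set.Icc (-|t|) (|t|) := by
      constructor <;> simp [abs_nonneg t, neg_nonpos.mpr (abs_nonneg t)]
    have hmemt : t ∈ Set.Icc (-|t|) (|t|) := by
      constructor
      · exact neg_abs_le t
      · exact le_abs_self t
    have := Convex.norm_image_sub_le_of_norm_hasDerivWithin_le
      (f := fun u : ℝ => g1 (a + u) - g1 a - g2 a * u)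
      (f' := fun u : ℝ => g2 (a + u) - g2 a) (s := Set.Icc (-|t|) (|t|)) (C := K * |t|)
      (fun y _ => by
        have := (((hasDerivAt_shift h2 a y).sub_const
          (g1 a)).sub ((hasDerivAt_id y).const_mul (g2 a))).hasDerivWithinAt
          (s := Set.Icc (-|t|) (|t|))
        simpa [Pi.sub_def] using this)
      (fun y hy => by
        have h1' := stepA y
        have h2' : |y| ≤ |t| := abs_le.mpr ⟨hy.1, hy.2⟩
        have : |g2 (a + y) - g2 a| ≤ K * |t| :=
          le_trans h1' (by nlinarith [abs_nonneg y])
        simpa [mul_comm] using this)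
      (convex_Icc _ _) hmem0 hmemt
    simp only [mul_zero, sub_zero, add_zero, Real.norm_eq_abs, sub_self] at this
    have habs : |t| * |t| = t^2 := by rw [← abs_mul, abs_of_nonneg (mul_self_nonneg t)]; ring
    calc |g1 (a + t) - g1 a - g2 a * t| ≤ K * |t| * |t| := by
          have h' : |g1 (a + t) - g1 a - g2 a * t - 0| ≤ K * |t| * |t| := by
            simpa using this
          simpa using h'
    _ = K * t^2 := by rw [mul_assoc, habs]
  -- Step C
  have hmem0 : (0:ℝ) ∈ Set.Icc (-|x|) (|x|) := by
    constructor <;> simp [abs_nonneg x, neg_nonpos.mpr (abs_nonneg x)]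
  have hmemx : x ∈ Set.Icc (-|x|) (|x|) := ⟨neg_abs_le x, le_abs_self x⟩
  have := Convex.norm_image_sub_le_of_norm_hasDerivWithin_le
    (f := fun u : ℝ => g (a + u) - g a - g1 a * u - g2 a * u^2/2)
    (f' := fun u : ℝ => g1 (a + u) - g1 a - g2 a * u) (s := Set.Icc (-|x|) (|x|)) (C := K * x^2)
    (fun y _ => by
      have hd : HasDerivAt (fun u : ℝ => g (a + u) - g a - g1 a * u - g2 a * u^2/2)
          (g1 (a + y) - g1 a - g2 a * y) y := by
        have hsq : HasDerivAt (fun u : ℝ => g2 a * u^2/2) (g2 a * y) y := by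
          have := ((hasDerivAt_pow 2 y).const_mul (g2 a)).div_const 2
          refine this.congr_deriv ?_
          ring
        have := (((hasDerivAt_shift h1 a y).sub_const
            (g a)).sub ((hasDerivAt_id y).const_mul (g1 a))).sub hsq
        simpa [Pi.sub_def] using this
      exact hd.hasDerivWithinAt)
    (fun y hy => by
      have hb := stepB y
      have h2' : |y| ≤ |x| := abs_le.mpr ⟨hy.1, hy.2⟩
      have hy2 : y^2 ≤ x^2 := by nlinarith [abs_nonneg y, sq_abs y, sq_abs x]
      simpa using le_trans hb (by nlinarith))
    (convex_Icc _ _) hmem0 hmemx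
  simp only [mul_zero, sub_zero, add_zero, Real.norm_eq_abs, sub_self] at this
  have habs3 : x^2 * |x| = |x|^3 := by rw [← sq_abs]; ring
  calc |g (a + x) - g a - g1 a * x - g2 a * x^2/2|
      ≤ K * x^2 * |x| := by
        have h' : |g (a + x) - g a - g1 a * x - g2 a * x ^ 2 / 2 - 0| ≤ K * x^2 * |x| := by
          simpa using this
        simpa using h'
  _ = K * |x|^3 := by rw [mul_assoc, habs3]


lemma cb_sq : ∀ m : ℕ, (Nat.centralBinom m)^2 * (3*m+1) ≤ 16^m := by
  intro m
  induction m with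
  | zero => simp [Nat.centralBinom]
  | succ m ih =>
    have key := Nat.succ_mul_centralBinom_succ m
    have hsq : ((m+1) * Nat.centralBinom (m+1))^2 = (2*(2*m+1)*Nat.centralBinom m)^2 := by
      rw [key]
    have hpos : 0 < (m+1)^2 := by positivity
    refine Nat.le_of_mul_le_mul_left ?_ hpos
    calc (m+1)^2 * ((Nat.centralBinom (m+1))^2 * (3*(m+1)+1))
          = ((m+1) * Nat.centralBinom (m+1))^2 * (3*m+4) := by ring
      _ = (2*(2*m+1)*Nat.centralBinom m)^2 * (3*m+4) := by rw [hsq]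
      _ = (Nat.centralBinom m)^2 * ((2*m+1)^2*(3*m+4)) * 4 := by ring
      _ ≤ (Nat.centralBinom m)^2 * (4*(m+1)^2*(3*m+1)) * 4 := by
          apply Nat.mul_le_mul_right
          apply Nat.mul_le_mul_left
          nlinarith
      _ = (m+1)^2 * ((Nat.centralBinom m)^2 * (3*m+1)) * 16 := by ring
      _ ≤ (m+1)^2 * 16^m * 16 := by
          apply Nat.mul_le_mul_right
          exact Nat.mul_le_mul_left _ ih
      _ = (m+1)^2 * 16^(m+1) := by ring

lemma mid_sq (n : ℕ) : (n.choose (n/2))^2 * (3*n-1) ≤ 2 * 4^n := by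
  rcases Nat.even_or_odd n with ⟨m, hm⟩ | ⟨m, hm⟩
  · subst hm
    have h : (m+m).choose ((m+m)/2) = Nat.centralBinom m := by
      rw [Nat.centralBinom]
      congr 1 <;> omega
    rw [h]
    have := cb_sq m
    have h4 : (4:ℕ)^(m+m) = 16^m := by
      rw [show m + m = 2*m by ring, pow_mul]
      norm_num
    rw [h4]
    calc (Nat.centralBinom m)^2 * (3*(m+m)-1) ≤ (Nat.centralBinom m)^2 * (2*(3*m+1)) := by
          apply Nat.mul_le_mul_left
          omega
    _ = 2 * ((Nat.centralBinom m)^2 * (3*m+1)) := by ring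
    _ ≤ 2 * 16^m := by omega
  · subst hm
    have hh : (2*m+1)/2 = m := by omega
    rw [hh]
    have hch : (2*m+1).choose m ≤ 2 * Nat.centralBinom m := by
      rcases Nat.eq_zero_or_pos m with h0 | hpos
      · subst h0; simp [Nat.centralBinom]
      · obtain ⟨m', rfl⟩ : ∃ m', m = m' + 1 := ⟨m-1, by omega⟩
        rw [show 2*(m'+1)+1 = (2*m'+2)+1 from by ring, Nat.choose_succ_succ']
        have e1 : (2*m'+2).choose m' ≤ (2*m'+2).choose ((2*m'+2)/2) := Nat.choose_le_middle _ _
        have e2 : (2*m'+2).choose (m'+1) ≤ (2*m'+2).choose ((2*m'+2)/2) := Nat.choose_le_middle _ _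
        have hmid : (2*m'+2)/2 = m'+1 := by omega
        rw [hmid] at e1 e2
        have hc : (2*m'+2).choose (m'+1) = Nat.centralBinom (m'+1) := by
          rw [Nat.centralBinom, show 2*(m'+1) = 2*m'+2 from by ring]
        rw [hc] at e1 e2
        omega
    have h16 : (4:ℕ)^(2*m+1) = 4 * 16^m := by
      rw [pow_succ, pow_mul]
      norm_num
      ring
    have := cb_sq m
    calc ((2*m+1).choose m)^2 * (3*(2*m+1)-1) ≤ (2*Nat.centralBinom m)^2 * (2*(3*m+1)) := by
          apply Nat.mul_le_mul
          · exact Nat.pow_le_pow_left hch 2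
          · omega
    _ = 8 * ((Nat.centralBinom m)^2 * (3*m+1)) := by ring
    _ ≤ 8 * 16^m := by omega
    _ = 2 * (4*16^m) := by ring
    _ = 2 * 4^(2*m+1) := by rw [h16]

noncomputable def TB {n : ℕ} (e : Fin n → Bool) : ℕ := (Finset.univ.filter (fun k => e k = true)).card

lemma TB_le {n : ℕ} (e : Fin n → Bool) : TB e ≤ n := by
  have := Finset.card_filter_le (Finset.univ : Finset (Fin n)) (fun k => e k = true)
  simpa [TB] using this

lemma fiber_card (n m : ℕ) :
    (Finset.univ.filter (fun e : Fin n → Bool => TB e = m)).card = n.choose m := by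
  have : (Finset.univ.filter (fun e : Fin n → Bool => TB e = m)).card
      = (Finset.powersetCard m (Finset.univ : Finset (Fin n))).card := by
    apply Finset.card_bij (fun e _ => Finset.univ.filter (fun k => e k = true))
    · intro e he
      simp only [Finset.mem_filter, Finset.mem_univ, true_and] at he
      rw [Finset.mem_powersetCard]
      exact ⟨Finset.filter_subset _ _, he⟩
    · intro e he e' he' h
      funext k
      have h2 := Finset.ext_iff.mp h k
      simp only [Finset.mem_filter, Finset.mem_univ, true_and] at h2
      rw [Bool.eq_iff_iff]
      exact h2
    · intro A hA
      rw [Finset.mem_powersetCard] at hA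
      refine ⟨fun k => decide (k ∈ A), ?_, ?_⟩
      · rw [Finset.mem_filter]
        simp only [Finset.mem_filter, Finset.mem_univ, true_and, TB]
        rw [← hA.2]
        congr 1
        ext k
        simp
      · ext k
        simp
  rw [this, Finset.card_powersetCard, Finset.card_univ, Fintype.card_fin]

lemma sqrt_ge {n : ℕ} (hn : 11000 ≤ n) : (104:ℝ) ≤ Real.sqrt n := by
  have h1 : (104:ℝ) = Real.sqrt (104^2) := by
    rw [Real.sqrt_sq (by norm_num)]
  rw [h1]
  apply Real.sqrt_le_sqrt
  have : ((11000:ℕ):ℝ) ≤ (n:ℝ) := Nat.cast_le.mpr hn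
  push_cast at this ⊢
  nlinarith

/-- The central tail bound for fair coins. -/
lemma bool_tail (n : ℕ) (hn : 11000 ≤ n) :
    (1/16 : ℝ) ≤ ((Finset.univ.filter (fun e : Fin n → Bool =>
      (1.05:ℝ) * Real.sqrt n ≤ 2*(TB e : ℝ) - n)).card : ℝ) * (1/2)^n := by
  classical
  set a : ℝ := (1.05:ℝ) * Real.sqrt n with ha
  have hs := sqrt_ge hn
  have hn1 : (11000:ℝ) ≤ (n:ℝ) := by exact_mod_cast hn
  have hsq : Real.sqrt n ^ 2 = n := Real.sq_sqrt (by positivity)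
  have ha_pos : 0 < a := by
    rw [ha]; nlinarith
  set Pos := Finset.univ.filter (fun e : Fin n → Bool => a ≤ 2*(TB e : ℝ) - n) with hPos
  set Neg := Finset.univ.filter (fun e : Fin n → Bool => 2*(TB e : ℝ) - n ≤ -a) with hNeg
  set Win := Finset.univ.filter (fun e : Fin n → Bool => |2*(TB e : ℝ) - n| < a) with hWin
  -- symmetry : Neg.card = Pos.card
  have hTBnot : ∀ e : Fin n → Bool, TB (fun k => !(e k)) = n - TB e := by
    intro e
    have : (Finset.univ.filter (fun k => (!(e k)) = true)) =
        (Finset.univ.filter (fun k => e k = true))ᶜ := by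
      ext k; simp
    rw [TB, this, Finset.card_compl, Fintype.card_fin]
    rfl
  have hsym : Neg.card = Pos.card := by
    apply Finset.card_bij (fun e _ => (fun k => !(e k)))
    · intro e he
      simp only [hNeg, Finset.mem_filter, Finset.mem_univ, true_and] at he
      simp only [hPos, Finset.mem_filter, Finset.mem_univ, true_and]
      rw [hTBnot e]
      have h1 := TB_le e
      have : ((n - TB e : ℕ) : ℝ) = (n : ℝ) - TB e := by
        rw [Nat.cast_sub h1]
      rw [this]
      linarith
    · intro e _ e' _ h
      funext k
      have := congr_fun h k
      cases hek : e k <;> cases hek' : e' k <;> simp [hek, hek'] at this ⊢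
    · intro e he
      simp only [hPos, Finset.mem_filter, Finset.mem_univ, true_and] at he
      refine ⟨fun k => !(e k), ?_, ?_⟩
      · simp only [hNeg, Finset.mem_filter, Finset.mem_univ, true_and]
        rw [hTBnot e]
        have h1 := TB_le e
        have : ((n - TB e : ℕ) : ℝ) = (n : ℝ) - TB e := by
          rw [Nat.cast_sub h1]
        rw [this]
        linarith
      · funext k; cases hek : e k <;> simp [hek]
  -- cover
  have hcover : (2:ℝ)^n ≤ (Pos.card : ℝ) + Neg.card + Win.card := by
    have hsub : (Finset.univ : Finset (Fin n → Bool)) ⊆ Pos ∪ Neg ∪ Win := by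
      intro e _
      simp only [hPos, hNeg, hWin, Finset.mem_union, Finset.mem_filter, Finset.mem_univ, true_and]
      rcases lt_or_ge (|2*(TB e : ℝ) - n|) a with h | h
      · right; exact h
      · left
        rcases le_abs.mp h with h' | h'
        · left; linarith
        · right; linarith
    have h1 : (Finset.univ : Finset (Fin n → Bool)).card ≤ Pos.card + Neg.card + Win.card := by
      calc (Finset.univ : Finset (Fin n → Bool)).card ≤ (Pos ∪ Neg ∪ Win).card :=
            Finset.card_le_card hsub
      _ ≤ (Pos ∪ Neg).card + Win.card := Finset.card_union_le _ _
      _ ≤ Pos.card + Neg.card + Win.card := by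
            have := Finset.card_union_le Pos Neg
            omega
    have h2 : (Finset.univ : Finset (Fin n → Bool)).card = 2^n := by
      simp [Finset.card_univ]
    rw [h2] at h1
    exact_mod_cast h1
  -- window bound
  have hwin : (Win.card : ℝ) ≤ (a + 2) * (n.choose (n/2)) := by
    set t := (Finset.range (n+1)).filter (fun m : ℕ => |2*((m:ℕ):ℝ) - (n:ℝ)| < a) with ht
    have hfib : Win.card = ∑ m ∈ t, (Win.filter (fun e => TB e = m)).card := by
      apply Finset.card_eq_sum_card_fiberwise
      intro e he
      simp only [hWin, Finset.mem_coe, Finset.mem_filter, Finset.mem_univ, true_and] at he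
      simp only [ht, Finset.mem_coe, Finset.mem_filter, Finset.mem_range]
      exact ⟨Nat.lt_succ_of_le (TB_le e), he⟩
    have hterm : ∀ m ∈ t, (Win.filter (fun e => TB e = m)).card ≤ n.choose (n/2) := by
      intro m _
      calc (Win.filter (fun e => TB e = m)).card
          ≤ (Finset.univ.filter (fun e : Fin n → Bool => TB e = m)).card := by
            apply Finset.card_le_card
            intro e he
            simp only [Finset.mem_filter] at he ⊢
            exact ⟨Finset.mem_univ _, he.2⟩
      _ = n.choose m := fiber_card n m
      _ ≤ n.choose (n/2) := Nat.choose_le_middle m n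
    have hcard_sum : Win.card ≤ t.card * (n.choose (n/2)) := by
      rw [hfib]
      calc ∑ m ∈ t, (Win.filter (fun e => TB e = m)).card ≤ ∑ m ∈ t, n.choose (n/2) :=
            Finset.sum_le_sum hterm
      _ = t.card * (n.choose (n/2)) := by rw [Finset.sum_const, smul_eq_mul]
    have htcard : (t.card : ℝ) ≤ a + 2 := by
      set A := ⌊((n:ℝ) - a)/2⌋₊ with hA
      set B := ⌈((n:ℝ) + a)/2⌉₊ with hB
      have hsub : t ⊆ Finset.Ico (A+1) B := by
        intro m hm
        simp only [ht, Finset.mem_filter, Finset.mem_range] at hm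
        have habs := abs_lt.mp hm.2
        have hna : 0 ≤ ((n:ℝ) - a)/2 := by nlinarith
        rw [Finset.mem_Ico]
        constructor
        · -- A < m i.e. A + 1 ≤ m
          have h1 : (A:ℝ) ≤ ((n:ℝ) - a)/2 := Nat.floor_le hna
          have h2 : ((n:ℝ) - a)/2 < m := by linarith
          have : (A:ℝ) < m := lt_of_le_of_lt h1 h2
          exact_mod_cast this
        · have h1 : (m:ℝ) < ((n:ℝ) + a)/2 := by linarith
          have h2 : ((n:ℝ) + a)/2 ≤ B := Nat.le_ceil _
          have : (m:ℝ) < B := lt_of_lt_of_le h1 h2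
          exact_mod_cast this
      have hc1 : t.card ≤ (Finset.Ico (A+1) B).card := Finset.card_le_card hsub
      rw [Nat.card_Ico] at hc1
      rcases le_or_gt B (A+1) with hBA | hBA
      · have : B - (A+1) = 0 := Nat.sub_eq_zero_of_le hBA
        rw [this] at hc1
        have : t.card = 0 := Nat.le_zero.mp hc1
        rw [this]
        simp
        linarith
      · have hcast : ((B - (A+1) : ℕ) : ℝ) = (B:ℝ) - (A+1) := by
          rw [Nat.cast_sub (le_of_lt hBA)]
          push_cast
          ring
        have h1 : (t.card : ℝ) ≤ ((B - (A+1) : ℕ) : ℝ) := Nat.cast_le.mpr hc1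
        rw [hcast] at h1
        have hBle : (B:ℝ) < ((n:ℝ) + a)/2 + 1 := Nat.ceil_lt_add_one (by nlinarith)
        have hAge : ((n:ℝ) - a)/2 - 1 < (A:ℝ) := by
          have := Nat.lt_floor_add_one (((n:ℝ) - a)/2)
          linarith
        linarith
    calc (Win.card : ℝ) ≤ (t.card : ℝ) * (n.choose (n/2) : ℝ) := by
          exact_mod_cast Nat.cast_le.mpr hcard_sum
    _ ≤ (a + 2) * (n.choose (n/2)) := by
          apply mul_le_mul_of_nonneg_right htcard (Nat.cast_nonneg _)
  -- the mid binomial bound, in ℝ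
  have hmid : ((n.choose (n/2) : ℝ))^2 * (3*(n:ℝ) - 1) ≤ 2 * 4^n := by
    have := mid_sq n
    have hcast : ((3*n-1 : ℕ):ℝ) = 3*(n:ℝ) - 1 := by
      rw [Nat.cast_sub (by omega)]
      push_cast; ring
    calc ((n.choose (n/2) : ℝ))^2 * (3*(n:ℝ) - 1) = (((n.choose (n/2))^2 * (3*n-1) : ℕ) : ℝ) := by
          rw [Nat.cast_mul, hcast]; push_cast; ring
    _ ≤ ((2 * 4^n : ℕ) : ℝ) := Nat.cast_le.mpr this
    _ = 2 * 4^n := by push_cast; ring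
  -- conclude Win.card ≤ (7/8) * 2^n
  have hwin2 : (Win.card : ℝ) ≤ (7/8) * 2^n := by
    have h2 : ((a+2) * (n.choose (n/2) : ℝ))^2 ≤ ((7/8) * 2^n)^2 := by
      have hchoose_nonneg : (0:ℝ) ≤ (n.choose (n/2) : ℝ) := Nat.cast_nonneg _
      have h4 : ((2:ℝ)^n)^2 = 4^n := by
        rw [← pow_mul, mul_comm, pow_mul]; norm_num
      have hkey : 2 * (a+2)^2 ≤ (49/64) * (3*(n:ℝ) - 1) := by
        rw [ha]
        have s := Real.sqrt n
        nlinarith [hs, hsq]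
      have h3n : (0:ℝ) < 3*(n:ℝ) - 1 := by nlinarith
      calc ((a+2) * (n.choose (n/2) : ℝ))^2 = (a+2)^2 * ((n.choose (n/2) : ℝ))^2 := by ring
      _ ≤ (a+2)^2 * (2 * 4^n / (3*(n:ℝ)-1)) := by
            apply mul_le_mul_of_nonneg_left _ (by positivity)
            rw [le_div_iff₀ h3n]
            exact hmid
      _ ≤ (49/64) * 4^n := by
            have h4n : (0:ℝ) < 4^n := by positivity
            calc (a+2)^2 * (2 * 4^n / (3*(n:ℝ)-1)) = (2*(a+2)^2) * (4^n / (3*(n:ℝ)-1)) := by ring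
            _ ≤ ((49/64) * (3*(n:ℝ) - 1)) * (4^n / (3*(n:ℝ)-1)) := by
                  apply mul_le_mul_of_nonneg_right hkey (by positivity)
            _ = (49/64) * 4^n := by
                  field_simp
      _ = ((7/8) * 2^n)^2 := by rw [mul_pow, h4]; norm_num
    have hL : (0:ℝ) ≤ (a+2) * (n.choose (n/2) : ℝ) := by positivity
    have hR : (0:ℝ) ≤ (7/8) * 2^n := by positivity
    calc (Win.card : ℝ) ≤ (a + 2) * (n.choose (n/2)) := hwin
    _ ≤ (7/8) * 2^n := (pow_le_pow_iff_left₀ hL hR two_ne_zero).mp h2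
  -- final assembly
  have hPosCard : (2:ℝ)^n / 16 ≤ (Pos.card : ℝ) := by
    have : (Neg.card : ℝ) = Pos.card := by exact_mod_cast hsym
    linarith [hcover, hwin2]
  have h2n : (0:ℝ) < 2^n := by positivity
  calc (1/16 : ℝ) = (2^n/16) * (1/2)^n := by
        rw [div_pow, one_pow]
        rw [div_mul_div_comm, mul_one, mul_comm (16:ℝ) (2^n), ← div_div,
          div_self (ne_of_gt h2n)]
  _ ≤ (Pos.card : ℝ) * (1/2)^n := by
        apply mul_le_mul_of_nonneg_right hPosCard (by positivity)


section Lindeberg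

variable {ι : Type*} [Fintype ι] {κ : Type*} [Fintype κ]

noncomputable def EXPt (q v : ι → ℝ) (n : ℕ) (f : ℝ → ℝ) (t : ℝ) : ℝ :=
  ∑ s : Fin n → ι, (∏ k, q (s k)) * f (t + ∑ k, v (s k))

lemma EXPt_zero (q v : ι → ℝ) (f : ℝ → ℝ) (t : ℝ) : EXPt q v 0 f t = f t := by
  simp [EXPt]

lemma EXPt_succ (q v : ι → ℝ) (n : ℕ) (f : ℝ → ℝ) (t : ℝ) :
    EXPt q v (n+1) f t = ∑ i, q i * EXPt q v n f (t + v i) := by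
  rw [EXPt, ← (Fin.consEquiv (fun _ : Fin (n+1) => ι)).sum_comp
      (fun s : Fin (n+1) → ι => (∏ k, q (s k)) * f (t + ∑ k, v (s k))), Fintype.sum_prod_type]
  refine Finset.sum_congr rfl fun i _ => ?_
  rw [EXPt, Finset.mul_sum]
  refine Finset.sum_congr rfl fun s _ => ?_
  have h1 : ∏ k : Fin (n+1), q ((Fin.consEquiv (fun _ => ι)) (i, s) k) = q i * ∏ k, q (s k) := by
    rw [Fin.prod_univ_succ]
    simp [Fin.consEquiv]
  have h2 : (t + ∑ k : Fin (n+1), v ((Fin.consEquiv (fun _ => ι)) (i, s) k))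
      = (t + v i) + ∑ k, v (s k) := by
    rw [Fin.sum_univ_succ]
    simp [Fin.consEquiv]
    ring
  rw [h1, h2]
  ring

lemma weights_nonneg (q : ι → ℝ) (hq0 : ∀ i, 0 ≤ q i) {n : ℕ} (s : Fin n → ι) :
    0 ≤ ∏ k, q (s k) := Finset.prod_nonneg fun k _ => hq0 _

lemma weights_sum_one (q : ι → ℝ) (hq1 : ∑ i, q i = 1) (n : ℕ) :
    ∑ s : Fin n → ι, ∏ k, q (s k) = 1 := by
  have h := Finset.prod_univ_sum (fun _ : Fin n => (Finset.univ : Finset ι)) (fun _ i => q i)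
  rw [Fintype.piFinset_univ] at h
  rw [← h, hq1]
  simp

lemma expand_sum (q v : ι → ℝ) (hq1 : ∑ i, q i = 1) (f f1 f2 : ℝ → ℝ) (a : ℝ) :
    ∑ i, q i * f (a + v i) = f a + f1 a * (∑ i, q i * v i) + f2 a / 2 * (∑ i, q i * v i^2)
      + ∑ i, q i * (f (a + v i) - f a - f1 a * v i - f2 a * v i^2/2) := by
  have h : ∀ i : ι, q i * f (a + v i) = q i * f a + f1 a * (q i * v i) + f2 a/2 * (q i * v i^2)
      + q i * (f (a+v i) - f a - f1 a * v i - f2 a * v i^2/2) := fun i => by ring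
  rw [Finset.sum_congr rfl (fun i _ => h i), Finset.sum_add_distrib, Finset.sum_add_distrib,
    Finset.sum_add_distrib, ← Finset.mul_sum, ← Finset.mul_sum, ← Finset.sum_mul, hq1, one_mul]

lemma onestep (q v : ι → ℝ) (r w : κ → ℝ)
    (hq0 : ∀ i, 0 ≤ q i) (hq1 : ∑ i, q i = 1) (hr0 : ∀ j, 0 ≤ r j) (hr1 : ∑ j, r j = 1)
    (hm1 : ∑ i, q i * v i = ∑ j, r j * w j) (hm2 : ∑ i, q i * v i^2 = ∑ j, r j * w j^2)
    (f f1 f2 : ℝ → ℝ) (K : ℝ)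
    (hTay : ∀ a x, |f (a+x) - f a - f1 a * x - f2 a * x^2/2| ≤ K * |x|^3) (a : ℝ) :
    |∑ i, q i * f (a + v i) - ∑ j, r j * f (a + w j)|
      ≤ K * ((∑ i, q i * |v i|^3) + (∑ j, r j * |w j|^3)) := by
  have hK : 0 ≤ K := by
    have := hTay 0 1
    have h1 : (0:ℝ) ≤ K * |(1:ℝ)|^3 := le_trans (abs_nonneg _) this
    simpa using h1
  rw [expand_sum q v hq1 f f1 f2 a, expand_sum r w hr1 f f1 f2 a, hm1, hm2]
  have heq : ∀ X Y Z U V : ℝ, |X + Y + Z + U - (X + Y + Z + V)| = |U - V| := by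
    intro X Y Z U V; congr 1; ring
  rw [heq]
  have hb1 : |∑ i, q i * (f (a + v i) - f a - f1 a * v i - f2 a * v i^2/2)|
      ≤ K * ∑ i, q i * |v i|^3 := by
    calc |∑ i, q i * (f (a + v i) - f a - f1 a * v i - f2 a * v i^2/2)|
        ≤ ∑ i, |q i * (f (a + v i) - f a - f1 a * v i - f2 a * v i^2/2)| :=
          Finset.abs_sum_le_sum_abs _ _
    _ ≤ ∑ i, q i * (K * |v i|^3) := by
        apply Finset.sum_le_sum
        intro i _
        rw [abs_mul, abs_of_nonneg (hq0 i)]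
        exact mul_le_mul_of_nonneg_left (hTay a (v i)) (hq0 i)
    _ = K * ∑ i, q i * |v i|^3 := by
        rw [Finset.mul_sum]
        exact Finset.sum_congr rfl fun i _ => by ring
  have hb2 : |∑ j, r j * (f (a + w j) - f a - f1 a * w j - f2 a * w j^2/2)|
      ≤ K * ∑ j, r j * |w j|^3 := by
    calc |∑ j, r j * (f (a + w j) - f a - f1 a * w j - f2 a * w j^2/2)|
        ≤ ∑ j, |r j * (f (a + w j) - f a - f1 a * w j - f2 a * w j^2/2)| :=
          Finset.abs_sum_le_sum_abs _ _
    _ ≤ ∑ j, r j * (K * |w j|^3) := by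
        apply Finset.sum_le_sum
        intro j _
        rw [abs_mul, abs_of_nonneg (hr0 j)]
        exact mul_le_mul_of_nonneg_left (hTay a (w j)) (hr0 j)
    _ = K * ∑ j, r j * |w j|^3 := by
        rw [Finset.mul_sum]
        exact Finset.sum_congr rfl fun j _ => by ring
  calc |(∑ i, q i * (f (a + v i) - f a - f1 a * v i - f2 a * v i^2/2))
        - ∑ j, r j * (f (a + w j) - f a - f1 a * w j - f2 a * w j^2/2)|
      ≤ |∑ i, q i * (f (a + v i) - f a - f1 a * v i - f2 a * v i^2/2)|
        + |∑ j, r j * (f (a + w j) - f a - f1 a * w j - f2 a * w j^2/2)| := abs_sub _ _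
  _ ≤ K * ∑ i, q i * |v i|^3 + K * ∑ j, r j * |w j|^3 := add_le_add hb1 hb2
  _ = K * ((∑ i, q i * |v i|^3) + (∑ j, r j * |w j|^3)) := by ring

lemma lindeberg (q v : ι → ℝ) (r w : κ → ℝ)
    (hq0 : ∀ i, 0 ≤ q i) (hq1 : ∑ i, q i = 1) (hr0 : ∀ j, 0 ≤ r j) (hr1 : ∑ j, r j = 1)
    (hm1 : ∑ i, q i * v i = ∑ j, r j * w j) (hm2 : ∑ i, q i * v i^2 = ∑ j, r j * w j^2)
    (f f1 f2 : ℝ → ℝ) (K : ℝ)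
    (hTay : ∀ a x, |f (a+x) - f a - f1 a * x - f2 a * x^2/2| ≤ K * |x|^3) :
    ∀ (n : ℕ) (t : ℝ), |EXPt q v n f t - EXPt r w n f t|
      ≤ n * (K * ((∑ i, q i * |v i|^3) + (∑ j, r j * |w j|^3))) := by
  have hK : 0 ≤ K := by
    have := hTay 0 1
    have h1 : (0:ℝ) ≤ K * |(1:ℝ)|^3 := le_trans (abs_nonneg _) this
    simpa using h1
  set Bd := K * ((∑ i, q i * |v i|^3) + (∑ j, r j * |w j|^3)) with hBdDef
  have hBd0 : 0 ≤ Bd := by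
    apply mul_nonneg hK
    apply add_nonneg <;> exact Finset.sum_nonneg fun x _ =>
      mul_nonneg (by first | exact hq0 x | exact hr0 x) (by positivity)
  intro n
  induction n with
  | zero => intro t; simp [EXPt_zero]
  | succ n ih =>
    intro t
    rw [EXPt_succ, EXPt_succ]
    set X : ι → ℝ := fun i => EXPt q v n f (t + v i) with hX
    set X' : ι → ℝ := fun i => EXPt r w n f (t + v i) with hX'
    set Y : κ → ℝ := fun j => EXPt r w n f (t + w j) with hY
    have e1 : ∀ (z : ℝ), EXPt r w n f (t + z)
        = ∑ s : Fin n → κ, (∏ k, r (s k)) * f ((t + ∑ k, w (s k)) + z) := by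
      intro z
      rw [EXPt]
      refine Finset.sum_congr rfl fun s _ => ?_
      congr 1
      ring
    have e2 : (∑ i, q i * X' i)
        = ∑ s : Fin n → κ, (∏ k, r (s k)) * (∑ i, q i * f ((t + ∑ k, w (s k)) + v i)) := by
      have h : ∀ i : ι, q i * X' i
          = ∑ s : Fin n → κ, q i * ((∏ k, r (s k)) * f ((t + ∑ k, w (s k)) + v i)) := by
        intro i
        rw [hX']
        simp only []
        rw [e1 (v i), Finset.mul_sum]
      rw [Finset.sum_congr rfl fun i _ => h i, Finset.sum_comm]
      refine Finset.sum_congr rfl fun s _ => ?_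
      rw [Finset.mul_sum]
      exact Finset.sum_congr rfl fun i _ => by ring
    have e3 : (∑ j, r j * Y j)
        = ∑ s : Fin n → κ, (∏ k, r (s k)) * (∑ j, r j * f ((t + ∑ k, w (s k)) + w j)) := by
      have h : ∀ j : κ, r j * Y j
          = ∑ s : Fin n → κ, r j * ((∏ k, r (s k)) * f ((t + ∑ k, w (s k)) + w j)) := by
        intro j
        rw [hY]
        simp only []
        rw [e1 (w j), Finset.mul_sum]
      rw [Finset.sum_congr rfl fun j _ => h j, Finset.sum_comm]
      refine Finset.sum_congr rfl fun s _ => ?_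
      rw [Finset.mul_sum]
      exact Finset.sum_congr rfl fun j _ => by ring
    have key : |(∑ i, q i * X' i) - ∑ j, r j * Y j| ≤ Bd := by
      rw [e2, e3, ← Finset.sum_sub_distrib]
      have hterm : ∀ s : Fin n → κ,
          (∏ k, r (s k)) * (∑ i, q i * f ((t + ∑ k, w (s k)) + v i))
            - (∏ k, r (s k)) * (∑ j, r j * f ((t + ∑ k, w (s k)) + w j))
          = (∏ k, r (s k)) * ((∑ i, q i * f ((t + ∑ k, w (s k)) + v i))
            - ∑ j, r j * f ((t + ∑ k, w (s k)) + w j)) := fun s => by ring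
      rw [Finset.sum_congr rfl fun s _ => hterm s]
      calc |∑ s : Fin n → κ, (∏ k, r (s k)) * ((∑ i, q i * f ((t + ∑ k, w (s k)) + v i))
            - ∑ j, r j * f ((t + ∑ k, w (s k)) + w j))|
          ≤ ∑ s : Fin n → κ, |(∏ k, r (s k)) * ((∑ i, q i * f ((t + ∑ k, w (s k)) + v i))
            - ∑ j, r j * f ((t + ∑ k, w (s k)) + w j))| := Finset.abs_sum_le_sum_abs _ _
      _ ≤ ∑ s : Fin n → κ, (∏ k, r (s k)) * Bd := by
          apply Finset.sum_le_sum
          intro s _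
          rw [abs_mul, abs_of_nonneg (weights_nonneg r hr0 s)]
          exact mul_le_mul_of_nonneg_left
            (onestep q v r w hq0 hq1 hr0 hr1 hm1 hm2 f f1 f2 K hTay (t + ∑ k, w (s k)))
            (weights_nonneg r hr0 s)
      _ = Bd := by rw [← Finset.sum_mul, weights_sum_one r hr1 n, one_mul]
    have first : |(∑ i, q i * X i) - ∑ i, q i * X' i| ≤ n * Bd := by
      rw [← Finset.sum_sub_distrib]
      rw [Finset.sum_congr rfl fun i (_ : i ∈ Finset.univ) => (mul_sub (q i) (X i) (X' i)).symm]
      calc |∑ i, q i * (X i - X' i)| ≤ ∑ i, |q i * (X i - X' i)| := Finset.abs_sum_le_sum_abs _ _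
      _ ≤ ∑ i, q i * (n * Bd) := by
          apply Finset.sum_le_sum
          intro i _
          rw [abs_mul, abs_of_nonneg (hq0 i)]
          exact mul_le_mul_of_nonneg_left (ih (t + v i)) (hq0 i)
      _ = n * Bd := by rw [← Finset.sum_mul, hq1, one_mul]
    have hsplit : (∑ i, q i * X i) - ∑ j, r j * Y j
        = ((∑ i, q i * X i) - ∑ i, q i * X' i) + ((∑ i, q i * X' i) - ∑ j, r j * Y j) := by
      ring
    rw [hsplit]
    calc |((∑ i, q i * X i) - ∑ i, q i * X' i) + ((∑ i, q i * X' i) - ∑ j, r j * Y j)|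
        ≤ |(∑ i, q i * X i) - ∑ i, q i * X' i| + |(∑ i, q i * X' i) - ∑ j, r j * Y j| :=
          abs_add_le _ _
    _ ≤ n * Bd + Bd := add_le_add first key
    _ = (n + 1 : ℕ) * Bd := by push_cast; ring

end Lindeberg


lemma coin_sum {n : ℕ} (α : ℝ) (e : Fin n → Bool) :
    ∑ k : Fin n, (if e k then α else -α) = α * (2 * (TB e : ℝ) - n) := by
  classical
  have h1 : ∀ k : Fin n, (if e k then α else -α)
      = 2 * α * (if e k = true then (1:ℝ) else 0) - α := by
    intro k
    by_cases hk : e k <;> simp [hk] <;> ring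
  rw [Finset.sum_congr rfl fun k _ => h1 k, Finset.sum_sub_distrib, Finset.sum_const,
    ← Finset.mul_sum, Finset.sum_boole]
  have : (Finset.filter (fun k => e k = true) Finset.univ).card = TB e := rfl
  rw [this]
  simp
  ring

/-- Tail lower bound: an i.i.d. centered sum with variance `α²` per step exceeds
`α √n` with probability at least `1/25`, for `n` large. -/
lemma tail_lower {ι : Type*} [Fintype ι] (q v : ι → ℝ) (α : ℝ)
    (hq0 : ∀ i, 0 ≤ q i) (hq1 : ∑ i, q i = 1)
    (hm1 : ∑ i, q i * v i = 0) (hm2 : ∑ i, q i * v i^2 = α^2) (hα : 0 < α) :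
    ∃ n₀ : ℕ, ∀ n, n₀ ≤ n →
      (1/25 : ℝ) ≤ ∑ s ∈ Finset.univ.filter
          (fun s : Fin n → ι => α * Real.sqrt n ≤ ∑ k, v (s k)), ∏ k, q (s k) := by
  classical
  set Bq : ℝ := ∑ i, q i * |v i|^3 with hBq
  have hBq0 : 0 ≤ Bq := Finset.sum_nonneg fun i _ => mul_nonneg (hq0 i) (by positivity)
  set c₁ : ℝ := 104000000 * (Bq + α^3) / α^3 with hc₁
  have hc₁0 : 0 ≤ c₁ := by
    apply div_nonneg _ (by positivity)
    have : (0:ℝ) ≤ Bq + α^3 := by positivity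
    positivity
  refine ⟨max 11000 (⌈(100*c₁)^2⌉₊ + 1), fun n hn => ?_⟩
  have hn1 : 11000 ≤ n := le_trans (le_max_left _ _) hn
  have hn2 : (⌈(100*c₁)^2⌉₊ + 1 : ℕ) ≤ n := le_trans (le_max_right _ _) hn
  have hnR : (11000:ℝ) ≤ (n:ℝ) := by exact_mod_cast hn1
  set sq := Real.sqrt n with hsq
  have hsqpos : 0 < sq := Real.sqrt_pos.mpr (by linarith)
  have hsq2 : sq^2 = n := Real.sq_sqrt (by linarith)
  have hsqerr : 100 * c₁ ≤ sq := by
    have h1 : ((⌈(100*c₁)^2⌉₊:ℝ) + 1) ≤ (n:ℝ) := by exact_mod_cast hn2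
    have h2 : (100*c₁)^2 ≤ (n:ℝ) := le_trans (le_trans (Nat.le_ceil _) (by linarith)) (le_refl _)
    have h3 : Real.sqrt ((100*c₁)^2) ≤ sq := Real.sqrt_le_sqrt h2
    rwa [Real.sqrt_sq (by positivity)] at h3
  set h : ℝ := α * sq / 200 with hh
  have hhpos : 0 < h := by positivity
  set b : ℝ := α * sq + 5 * h with hb
  -- the smooth threshold function
  set f : ℝ → ℝ := fun z => lg ((z - b)/h) with hf
  set f1 : ℝ → ℝ := fun z => lg1 ((z - b)/h) / h with hf1
  set f2 : ℝ → ℝ := fun z => lg2 ((z - b)/h) / h^2 with hf2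
  have hTay : ∀ a x, |f (a+x) - f a - f1 a * x - f2 a * x^2/2| ≤ (13/h^3) * |x|^3 := by
    intro a x
    have key := taylor2_bound hasDerivAt_lg hasDerivAt_lg1 hasDerivAt_lg2 lg3_bound
      ((a - b)/h) (x/h)
    have harg : (a - b)/h + x/h = (a + x - b)/h := by field_simp; ring
    rw [harg] at key
    have e3 : lg1 ((a-b)/h) / h * x = lg1 ((a-b)/h) * (x/h) := by ring
    have e4 : lg2 ((a-b)/h) / h^2 * x^2/2 = lg2 ((a-b)/h) * (x/h)^2/2 := by ring
    have e5 : (13:ℝ) * |x/h|^3 = 13/h^3 * |x|^3 := by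
      rw [abs_div, abs_of_pos hhpos]; ring
    simp only [hf, hf1, hf2]
    rw [e3, e4, ← e5]
    exact key
  -- the coin side
  set r : Bool → ℝ := fun _ => (1/2 : ℝ) with hr
  set w : Bool → ℝ := fun e => if e then α else -α with hw
  have hr0 : ∀ j, 0 ≤ r j := fun _ => by norm_num [hr]
  have hr1 : ∑ j, r j = 1 := by simp [hr]; try norm_num
  have hmm1 : ∑ i, q i * v i = ∑ j, r j * w j := by
    rw [hm1, Fintype.sum_bool]
    simp [hr, hw]
  have hmm2 : ∑ i, q i * v i^2 = ∑ j, r j * w j^2 := by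
    rw [hm2, Fintype.sum_bool]
    simp [hr, hw]
    try ring
  have hBw : ∑ j, r j * |w j|^3 = α^3 := by
    rw [Fintype.sum_bool]
    simp [hr, hw, abs_of_pos hα]
    try ring
  -- Lindeberg comparison at t = 0
  have hlin := lindeberg q v r w hq0 hq1 hr0 hr1 hmm1 hmm2 f f1 f2 (13/h^3) hTay n 0
  rw [hBw] at hlin
  -- error estimate
  have herr : (n:ℝ) * (13/h^3 * (Bq + α^3)) ≤ 1/100 := by
    have hh3 : h^3 = α^3 * sq^3 / 200^3 := by rw [hh]; ring
    have hsq3 : sq^3 = sq * (n:ℝ) := by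
      have : sq^3 = sq * sq^2 := by ring
      rw [this, hsq2]
    have hexpr : (n:ℝ) * (13/h^3 * (Bq + α^3)) = c₁ / sq := by
      rw [hh3, hsq3, hc₁]
      field_simp
      ring
    rw [hexpr]
    rw [div_le_iff₀ hsqpos]
    calc c₁ = (100 * c₁) * (1/100) := by ring
    _ ≤ sq * (1/100) := by
        apply mul_le_mul_of_nonneg_right hsqerr (by norm_num)
    _ = 1/100 * sq := by ring
  -- lower bound on the coin expectation
  have hcoin : (1 - 1/148) * (1/16) ≤ EXPt r w n f 0 := by
    set Pos := Finset.univ.filter (fun e : Fin n → Bool =>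
      (1.05:ℝ) * Real.sqrt n ≤ 2*(TB e : ℝ) - n) with hPosDef
    have hbt := bool_tail n hn1
    have hterm : ∀ e ∈ Pos, (1 - 1/148 : ℝ) * (1/2)^n ≤ (∏ k : Fin n, r (e k)) * f (0 + ∑ k, w (e k)) := by
      intro e he
      simp only [hPosDef, Finset.mem_filter, Finset.mem_univ, true_and] at he
      have hwprod : (∏ k : Fin n, r (e k)) = (1/2:ℝ)^n := by
        rw [hr]
        rw [Finset.prod_const]
        congr 1
        simp
      have hS : ∑ k, w (e k) = α * (2 * (TB e : ℝ) - n) := by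
        rw [hw]; exact coin_sum α e
      have hflarge : (1 - 1/148 : ℝ) ≤ f (0 + ∑ k, w (e k)) := by
        rw [zero_add, hS]
        have harg : (5:ℝ) ≤ (α * (2 * (TB e : ℝ) - n) - b)/h := by
          rw [le_div_iff₀ hhpos]
          have hbh : b + 5 * h = 1.05 * (α * sq) := by
            rw [hb, hh]; ring
          have h2 : 1.05 * (α * sq) ≤ α * (2 * (TB e : ℝ) - n) := by
            have := mul_le_mul_of_nonneg_left he (le_of_lt hα)
            calc 1.05 * (α * sq) = α * (1.05 * sq) := by ring
            _ ≤ α * (2 * (TB e : ℝ) - n) := by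
                apply mul_le_mul_of_nonneg_left _ (le_of_lt hα)
                rw [hsq]
                exact he
          linarith [hbh]
        calc (1 - 1/148 : ℝ) ≤ lg 5 := lg_5
        _ ≤ lg ((α * (2 * (TB e : ℝ) - n) - b)/h) := lg_mono harg
      calc (1 - 1/148 : ℝ) * (1/2)^n ≤ f (0 + ∑ k, w (e k)) * (1/2)^n := by
            apply mul_le_mul_of_nonneg_right hflarge (by positivity)
      _ = (∏ k : Fin n, r (e k)) * f (0 + ∑ k, w (e k)) := by rw [hwprod]; ring
    calc (1 - 1/148 : ℝ) * (1/16)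
        ≤ (1 - 1/148 : ℝ) * ((Pos.card : ℝ) * (1/2)^n) := by
          apply mul_le_mul_of_nonneg_left hbt (by norm_num)
    _ = ∑ _e ∈ Pos, (1 - 1/148 : ℝ) * (1/2)^n := by
          rw [Finset.sum_const, nsmul_eq_mul]; ring
    _ ≤ ∑ e ∈ Pos, (∏ k : Fin n, r (e k)) * f (0 + ∑ k, w (e k)) := Finset.sum_le_sum hterm
    _ ≤ ∑ e : Fin n → Bool, (∏ k : Fin n, r (e k)) * f (0 + ∑ k, w (e k)) := by
          apply Finset.sum_le_sum_of_subset_of_nonneg (Finset.subset_univ _)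
          intro e _ _
          apply mul_nonneg (weights_nonneg r hr0 e)
          exact lg_nonneg _
    _ = EXPt r w n f 0 := rfl
  -- from Lindeberg : lower bound on the q-side expectation
  have hqexp : (1 - 1/148) * (1/16) - 1/100 ≤ EXPt q v n f 0 := by
    have habs := abs_le.mp (le_trans hlin herr)
    linarith [habs.1]
  -- upper bound : EXPt q v n f 0 ≤ P + 1/148
  set GoodS := Finset.univ.filter (fun s : Fin n → ι => α * Real.sqrt n ≤ ∑ k, v (s k)) with hGoodS
  set P : ℝ := ∑ s ∈ GoodS, ∏ k, q (s k) with hP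
  have hup : EXPt q v n f 0 ≤ P + 1/148 := by
    have e0 : EXPt q v n f 0 = ∑ s : Fin n → ι, (∏ k, q (s k)) * f (0 + ∑ k, v (s k)) := rfl
    have hsplit := Finset.sum_filter_add_sum_filter_not Finset.univ
      (fun s : Fin n → ι => α * Real.sqrt n ≤ ∑ k, v (s k))
      (fun s => (∏ k, q (s k)) * f (0 + ∑ k, v (s k)))
    set BadS := Finset.univ.filter
      (fun s : Fin n → ι => ¬ (α * Real.sqrt n ≤ ∑ k, v (s k))) with hBadS
    have hpart1 : ∑ s ∈ GoodS, (∏ k, q (s k)) * f (0 + ∑ k, v (s k)) ≤ P := by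
      rw [hP]
      apply Finset.sum_le_sum
      intro s _
      calc (∏ k, q (s k)) * f (0 + ∑ k, v (s k)) ≤ (∏ k, q (s k)) * 1 := by
            apply mul_le_mul_of_nonneg_left (lg_le_one _) (weights_nonneg q hq0 s)
      _ = ∏ k, q (s k) := by ring
    have hpart2 : ∑ s ∈ BadS, (∏ k, q (s k)) * f (0 + ∑ k, v (s k)) ≤ 1/148 := by
      have hterm2 : ∀ s ∈ BadS,
          (∏ k, q (s k)) * f (0 + ∑ k, v (s k)) ≤ (∏ k, q (s k)) * (1/148) := by
        intro s hs
        simp only [hBadS, Finset.mem_filter, Finset.mem_univ, true_and, not_le] at hs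
        apply mul_le_mul_of_nonneg_left _ (weights_nonneg q hq0 s)
        have harg : (0 + ∑ k, v (s k) - b)/h ≤ -5 := by
          rw [div_le_iff₀ hhpos]
          have hb5 : b - 5 * h = α * sq := by rw [hb, hh]; ring
          rw [zero_add]
          rw [← hsq] at hs
          nlinarith [hs, hhpos]
        calc f (0 + ∑ k, v (s k)) ≤ lg (-5) := lg_mono harg
        _ ≤ 1/148 := lg_neg5
      have h1 : ∑ s ∈ BadS, (∏ k, q (s k)) * f (0 + ∑ k, v (s k))
          ≤ ∑ s ∈ BadS, (∏ k, q (s k)) * (1/148) := Finset.sum_le_sum hterm2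
      have h2 : ∑ s ∈ BadS, (∏ k, q (s k)) * (1/148)
          ≤ ∑ s : Fin n → ι, (∏ k, q (s k)) * (1/148) := by
        apply Finset.sum_le_sum_of_subset_of_nonneg (Finset.filter_subset _ _)
        intro s _ _
        exact mul_nonneg (weights_nonneg q hq0 s) (by norm_num)
      have h3 : ∑ s : Fin n → ι, (∏ k, q (s k)) * (1/148) = 1/148 := by
        rw [← Finset.sum_mul, weights_sum_one q hq1 n, one_mul]
      linarith
    rw [e0, ← hsplit]
    linarith
  have hfinal : (1 - 1/148 : ℝ) * (1/16) - 1/100 - 1/148 ≤ P := by linarith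
  calc (1/25 : ℝ) ≤ (1 - 1/148 : ℝ) * (1/16) - 1/100 - 1/148 := by norm_num
  _ ≤ P := hfinal

section LinAlg

variable {η : Type*} [Fintype η] [DecidableEq η]

/-- inner product (antilinear in first argument) -/
noncomputable def ipc {η : Type*} [Fintype η] (u z : η → ℂ) : ℂ :=
  ∑ i, (starRingEnd ℂ) (u i) * z i

lemma ipc_conj {η : Type*} [Fintype η] (u z : η → ℂ) :
    (starRingEnd ℂ) (ipc u z) = ipc z u := by
  rw [ipc, map_sum]
  refine Finset.sum_congr rfl fun i _ => ?_
  rw [map_mul, Complex.conj_conj]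
  ring

/-- quadratic form -/
noncomputable def qf {η : Type*} [Fintype η] (M : Matrix η η ℂ) (x : η → ℂ) : ℂ :=
  ∑ i, ∑ i', (starRingEnd ℂ) (x i) * M i i' * x i'

lemma qf_add {η : Type*} [Fintype η] (A B : Matrix η η ℂ) (x : η → ℂ) :
    qf (A + B) x = qf A x + qf B x := by
  rw [qf, qf, qf, ← Finset.sum_add_distrib]
  refine Finset.sum_congr rfl fun i _ => ?_
  rw [← Finset.sum_add_distrib]
  refine Finset.sum_congr rfl fun i' _ => ?_
  rw [Matrix.add_apply]
  ring

lemma qf_outer {η : Type*} [Fintype η] (v x : η → ℂ) :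
    qf (outer v) x = ((Complex.normSq (ipc x v) : ℝ) : ℂ) := by
  have h1 : qf (outer v) x = ipc x v * ipc v x := by
    rw [qf, ipc, ipc, Finset.sum_mul_sum]
    refine Finset.sum_congr rfl fun i _ => Finset.sum_congr rfl fun i' _ => ?_
    show (starRingEnd ℂ) (x i) * (outer v) i i' * x i'
        = (starRingEnd ℂ) (x i) * v i * ((starRingEnd ℂ) (v i') * x i')
    rw [outer, Matrix.of_apply]
    ring
  rw [h1, ← ipc_conj x v, Complex.mul_conj]

lemma qf_sum_outer {η τ : Type*} [Fintype η] [Fintype τ] (c : τ → ℂ) (vv : τ → η → ℂ)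
    (x : η → ℂ) :
    qf (∑ t, c t • outer (vv t)) x = ∑ t, c t * ((Complex.normSq (ipc x (vv t)) : ℝ) : ℂ) := by
  have h1 : ∀ i i', (starRingEnd ℂ) (x i) * (∑ t, c t • outer (vv t)) i i' * x i'
      = ∑ t, c t * ((starRingEnd ℂ) (x i) * (outer (vv t)) i i' * x i') := by
    intro i i'
    rw [Matrix.sum_apply, Finset.mul_sum, Finset.sum_mul]
    refine Finset.sum_congr rfl fun t _ => ?_
    rw [Matrix.smul_apply, smul_eq_mul]
    ring
  rw [qf]
  rw [Finset.sum_congr rfl fun i (_ : i ∈ Finset.univ) =>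
    Finset.sum_congr rfl fun i' (_ : i' ∈ Finset.univ) => h1 i i']
  have h2 : ∀ i : η, (∑ i', ∑ t, c t * ((starRingEnd ℂ) (x i) * (outer (vv t)) i i' * x i'))
      = ∑ t, ∑ i', c t * ((starRingEnd ℂ) (x i) * (outer (vv t)) i i' * x i') :=
    fun i => Finset.sum_comm
  rw [Finset.sum_congr rfl fun i (_ : i ∈ Finset.univ) => h2 i, Finset.sum_comm]
  refine Finset.sum_congr rfl fun t _ => ?_
  rw [← qf_outer (vv t) x, qf, Finset.mul_sum]
  exact Finset.sum_congr rfl fun i _ => (Finset.mul_sum _ _ _).symm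

end LinAlg

lemma parseval {η τ : Type*} [Fintype η] [Fintype τ] [DecidableEq η] (u : τ → η → ℂ)
    (hcomp : ∀ i i', ∑ t, u t i * (starRingEnd ℂ) (u t i') = if i = i' then 1 else 0)
    (z : η → ℂ) :
    ∑ t, Complex.normSq (ipc (u t) z) = ∑ i, Complex.normSq (z i) := by
  have hC : ∑ t, ((Complex.normSq (ipc (u t) z) : ℝ) : ℂ)
      = ∑ i, ((Complex.normSq (z i) : ℝ) : ℂ) := by
    have h1 : ∀ t, ((Complex.normSq (ipc (u t) z) : ℝ) : ℂ)
        = ∑ i, ∑ i', ((starRingEnd ℂ) (z i) * z i') * (u t i * (starRingEnd ℂ) (u t i')) := by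
      intro t
      rw [← Complex.mul_conj (ipc (u t) z), ipc_conj]
      rw [ipc, ipc, Finset.sum_mul_sum]
      rw [Finset.sum_comm]
      exact Finset.sum_congr rfl fun i _ => Finset.sum_congr rfl fun i' _ => by ring
    rw [Finset.sum_congr rfl fun t (_ : t ∈ Finset.univ) => h1 t]
    rw [Finset.sum_comm]
    rw [Finset.sum_congr rfl fun i (_ : i ∈ Finset.univ) => Finset.sum_comm]
    have h2 : ∀ i i', ∑ t, ((starRingEnd ℂ) (z i) * z i') * (u t i * (starRingEnd ℂ) (u t i'))
        = ((starRingEnd ℂ) (z i) * z i') * (if i = i' then 1 else 0) := by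
      intro i i'
      rw [← Finset.mul_sum, hcomp]
    rw [Finset.sum_congr rfl fun i (_ : i ∈ Finset.univ) =>
      Finset.sum_congr rfl fun i' (_ : i' ∈ Finset.univ) => h2 i i']
    refine Finset.sum_congr rfl fun i _ => ?_
    have h3 : ∀ i' : η, ((starRingEnd ℂ) (z i) * z i') * (if i = i' then 1 else 0)
        = if i = i' then (starRingEnd ℂ) (z i) * z i' else 0 := by
      intro i'
      by_cases h : i = i' <;> simp [h]
    rw [Finset.sum_congr rfl fun i' (_ : i' ∈ Finset.univ) => h3 i']
    rw [Finset.sum_ite_eq]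
    simp [mul_comm, Complex.mul_conj]
  exact_mod_cast hC

lemma bessel {η τ : Type*} [Fintype η] [Fintype τ] [DecidableEq η] (u : τ → η → ℂ)
    (hcomp : ∀ i i', ∑ t, u t i * (starRingEnd ℂ) (u t i') = if i = i' then 1 else 0)
    (z : η → ℂ) (hz : ∑ i, Complex.normSq (z i) = 1) (S : Finset τ) :
    ∑ t ∈ S, Complex.normSq (ipc (u t) z) ≤ 1 := by
  rw [← hz, ← parseval u hcomp z]
  apply Finset.sum_le_sum_of_subset_of_nonneg (Finset.subset_univ S)
  intro t _ _
  exact Complex.normSq_nonneg _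

lemma herm_decomp {η : Type*} [Fintype η] [DecidableEq η] {A : Matrix η η ℂ}
    (hA : A.IsHermitian) :
    ∃ W : Matrix η η ℂ,
      (∀ i i', ∑ j, W i j * (starRingEnd ℂ) (W i' j) = if i = i' then 1 else 0) ∧
      (∀ j j', ∑ i, (starRingEnd ℂ) (W i j) * W i j' = if j = j' then 1 else 0) ∧
      A = ∑ j, (hA.eigenvalues j : ℂ) • outer (fun i => W i j) := by
  set W : Matrix η η ℂ := (hA.eigenvectorUnitary : Matrix η η ℂ) with hW
  have hmem : W ∈ Matrix.unitaryGroup η ℂ := hA.eigenvectorUnitary.2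
  have hrow : W * (star W) = 1 := (Matrix.mem_unitaryGroup_iff).mp hmem
  have hcol : (star W) * W = 1 := (Matrix.mem_unitaryGroup_iff').mp hmem
  refine ⟨W, ?_, ?_, ?_⟩
  · intro i i'
    have h := congr_fun (congr_fun hrow i) i'
    rw [Matrix.mul_apply] at h
    simpa [Matrix.star_apply, Matrix.one_apply] using h
  · intro j j'
    have h := congr_fun (congr_fun hcol j) j'
    rw [Matrix.mul_apply] at h
    simpa [Matrix.star_apply, Matrix.one_apply] using h
  · ext i i'
    have hAe := congr_fun (congr_fun (Matrix.IsHermitian.spectral_theorem hA) i) i'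
    rw [hAe, Unitary.conjStarAlgAut_apply, Matrix.mul_apply, Matrix.sum_apply]
    refine Finset.sum_congr rfl fun j _ => ?_
    rw [Matrix.mul_diagonal, Matrix.smul_apply, smul_eq_mul, Matrix.star_apply]
    show W i j * (RCLike.ofReal ∘ hA.eigenvalues) j * (starRingEnd ℂ) (W i' j)
        = (hA.eigenvalues j : ℂ) * ((outer fun i => W i j) i i')
    rw [outer, Matrix.of_apply]
    have : ((RCLike.ofReal ∘ hA.eigenvalues) j : ℂ) = ((hA.eigenvalues j : ℝ) : ℂ) := rfl
    rw [this]
    ring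

lemma trace_sum_outer {η τ : Type*} [Fintype η] [Fintype τ] (c : τ → ℂ) (vv : τ → η → ℂ) :
    Matrix.trace (∑ t, c t • outer (vv t))
      = ∑ t, c t * ((∑ i, Complex.normSq (vv t i) : ℝ) : ℂ) := by
  rw [Matrix.trace_sum]
  refine Finset.sum_congr rfl fun t _ => ?_
  rw [Matrix.trace_smul, smul_eq_mul]
  congr 1
  rw [Matrix.trace]
  push_cast
  refine Finset.sum_congr rfl fun i _ => ?_
  show (outer (vv t)) i i = _
  rw [outer, Matrix.of_apply, Complex.mul_conj]

lemma prod_delta {ι : Type*} [Fintype ι] [DecidableEq ι] {n : ℕ} (i i' : Fin n → ι) :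
    (∏ k, if i k = i' k then (1:ℂ) else 0) = if i = i' then 1 else 0 := by
  by_cases h : i = i'
  · subst h
    simp
  · rw [if_neg h]
    obtain ⟨k, hk⟩ : ∃ k, i k ≠ i' k := by
      by_contra hc
      push_neg at hc
      exact h (funext hc)
    exact Finset.prod_eq_zero (Finset.mem_univ k) (if_neg hk)

lemma kron_herm {ι : Type*} [Fintype ι] {ρ : Matrix ι ι ℂ} (hρ : ρ.IsHermitian) (n : ℕ) :
    (kronPow ρ n).IsHermitian := by
  have hentry : ∀ a b : ι, (starRingEnd ℂ) (ρ a b) = ρ b a := by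
    intro a b
    have := congr_fun (congr_fun hρ b) a
    rw [Matrix.conjTranspose_apply] at this
    exact this
  show Matrix.conjTranspose (kronPow ρ n) = kronPow ρ n
  ext i j
  rw [Matrix.conjTranspose_apply, kronPow, Matrix.of_apply, Matrix.of_apply]
  show (starRingEnd ℂ) (∏ k, ρ (j k) (i k)) = ∏ k, ρ (i k) (j k)
  rw [map_prod]
  exact Finset.prod_congr rfl fun k _ => hentry _ _

lemma kron_decomp {ι : Type*} [Fintype ι] [DecidableEq ι] (ρ : Matrix ι ι ℂ) (p : ι → ℝ)
    (V : Matrix ι ι ℂ) (hdec : ρ = ∑ j, (p j : ℂ) • outer (fun i => V i j)) (n : ℕ) :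
    kronPow ρ n = ∑ s : Fin n → ι, ((∏ k, p (s k) : ℝ) : ℂ)
      • outer (fun i : Fin n → ι => ∏ k, V (i k) (s k)) := by
  ext i i'
  show (∏ k, ρ (i k) (i' k)) = _
  have hentry : ∀ a b : ι, ρ a b = ∑ j, (p j : ℂ) * (V a j * (starRingEnd ℂ) (V b j)) := by
    intro a b
    rw [hdec, Matrix.sum_apply]
    refine Finset.sum_congr rfl fun j _ => ?_
    rw [Matrix.smul_apply, smul_eq_mul, outer, Matrix.of_apply]
  rw [Finset.prod_congr rfl fun k (_ : k ∈ Finset.univ) => hentry (i k) (i' k)]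
  rw [Finset.prod_univ_sum]
  rw [Fintype.piFinset_univ]
  rw [Matrix.sum_apply]
  refine Finset.sum_congr rfl fun s _ => ?_
  rw [Matrix.smul_apply, smul_eq_mul, outer, Matrix.of_apply]
  show ∏ k, (p (s k) : ℂ) * (V (i k) (s k) * (starRingEnd ℂ) (V (i' k) (s k)))
      = ((∏ k, p (s k) : ℝ) : ℂ) * ((∏ k, V (i k) (s k)) * (starRingEnd ℂ) (∏ k, V (i' k) (s k)))
  rw [Finset.prod_mul_distrib, Finset.prod_mul_distrib, map_prod]
  push_cast
  ring

lemma ptrace_outer_herm {A B : Type*} [Fintype A] [Fintype B] (ψ : A × B → ℂ) :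
    (ptraceB (outer ψ)).IsHermitian := by
  show Matrix.conjTranspose (ptraceB (outer ψ)) = ptraceB (outer ψ)
  ext a a'
  rw [Matrix.conjTranspose_apply]
  show (starRingEnd ℂ) (∑ b, (outer ψ) (a', b) (a, b)) = ∑ b, (outer ψ) (a, b) (a', b)
  rw [map_sum]
  refine Finset.sum_congr rfl fun b _ => ?_
  show (starRingEnd ℂ) (ψ (a', b) * (starRingEnd ℂ) (ψ (a, b))) = ψ (a, b) * (starRingEnd ℂ) (ψ (a', b))
  rw [map_mul, Complex.conj_conj]
  ring

lemma ptrace_outer_trace {A B : Type*} [Fintype A] [Fintype B] (ψ : A × B → ℂ)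
    (hnorm : ∑ ab, ‖ψ ab‖^2 = 1) : Matrix.trace (ptraceB (outer ψ)) = 1 := by
  rw [Matrix.trace]
  have h1 : ∀ a, Matrix.diag (ptraceB (outer ψ)) a = ∑ b, ((‖ψ (a, b)‖^2 : ℝ) : ℂ) := by
    intro a
    show ∑ b, (outer ψ) (a, b) (a, b) = _
    refine Finset.sum_congr rfl fun b _ => ?_
    show ψ (a, b) * (starRingEnd ℂ) (ψ (a, b)) = _
    rw [Complex.mul_conj]
    norm_cast
    rw [Complex.normSq_eq_norm_sq]
  rw [Finset.sum_congr rfl fun a (_ : a ∈ Finset.univ) => h1 a]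
  have h2 : ∑ a : A, ∑ b : B, ((‖ψ (a, b)‖^2 : ℝ) : ℂ) = ((∑ ab : A × B, ‖ψ ab‖^2 : ℝ) : ℂ) := by
    rw [Fintype.sum_prod_type]
    push_cast
    rfl
  rw [h2, hnorm]
  norm_num


lemma col_unit {η : Type*} [Fintype η] [DecidableEq η] (W : Matrix η η ℂ)
    (hWcol : ∀ j j', ∑ i, (starRingEnd ℂ) (W i j) * W i j' = if j = j' then 1 else 0) (j : η) :
    ∑ i, Complex.normSq (W i j) = 1 := by
  have h := hWcol j j
  rw [if_pos rfl] at h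
  have h2 : ∑ i, ((Complex.normSq (W i j) : ℝ) : ℂ) = 1 := by
    rw [← h]
    refine Finset.sum_congr rfl fun i _ => ?_
    rw [mul_comm, Complex.mul_conj]
  exact_mod_cast h2

lemma ipc_normSq_symm {η : Type*} [Fintype η] (a b : η → ℂ) :
    Complex.normSq (ipc a b) = Complex.normSq (ipc b a) := by
  rw [← ipc_conj, Complex.normSq_conj]

/-- Core of the main theorem, with abstracted spectral data for `ρ`. -/
lemma main_core {ι : Type*} [Fintype ι] [DecidableEq ι] [Nonempty ι]
    (ρ : Matrix ι ι ℂ) (p : ι → ℝ) (V : Matrix ι ι ℂ)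
    (hVrow : ∀ i i', ∑ j, V i j * (starRingEnd ℂ) (V i' j) = if i = i' then 1 else 0)
    (hVcol : ∀ j j', ∑ i, (starRingEnd ℂ) (V i j) * V i j' = if j = j' then 1 else 0)
    (hVdec : ρ = ∑ j, (p j : ℂ) • outer (fun i => V i j))
    (hρH : ρ.IsHermitian)
    (E α : ℝ) (hαpos : 0 < α)
    (hp0 : ∀ i, 0 ≤ p i) (hpsum : ∑ i, p i = 1)
    (hm1 : ∑ i, p i * (-(Real.logb 2 (p i) + E)) = 0)
    (hm2 : ∑ i, p i * (-(Real.logb 2 (p i) + E))^2 = α^2) :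
    ∃ n₀ : ℕ, ∀ n : ℕ, n₀ ≤ n → ∀ (B : Type) [Fintype B] [DecidableEq B] [Nonempty B],
      ∀ ψ : (Fin n → ι) × B → ℂ, (∑ ab, ‖ψ ab‖ ^ 2 = 1) →
      traceDist (ptraceB (outer ψ)) (kronPow ρ n) ≤ 1/100 →
      (1/100 : ℝ) * (2 : ℝ) ^ ((n : ℝ) * E + α * Real.sqrt n) < ((ptraceB (outer ψ)).rank : ℝ) := by
  classical
  set v : ι → ℝ := fun i => -(Real.logb 2 (p i) + E) with hvdef
  obtain ⟨n₀, htail⟩ := tail_lower p v α hp0 hpsum hm1 hm2 hαpos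
  refine ⟨n₀, fun n hn B _ _ _ ψ hnorm hdist => ?_⟩
  -- σ and its spectral data
  set σ := ptraceB (outer ψ) with hσdef
  have hσH : σ.IsHermitian := ptrace_outer_herm ψ
  have hσtr : Matrix.trace σ = 1 := ptrace_outer_trace ψ hnorm
  obtain ⟨W, hWrow, hWcol, hWdec⟩ := herm_decomp hσH
  set μ : (Fin n → ι) → ℝ := hσH.eigenvalues with hμdef
  set S := Finset.univ.filter (fun j : Fin n → ι => μ j ≠ 0) with hSdef
  set m := S.card with hmdef
  have hrank : σ.rank = m := by
    rw [Matrix.IsHermitian.rank_eq_card_non_zero_eigs hσH, hmdef, hSdef]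
    exact Fintype.card_subtype _
  -- Δ and its spectral data
  set Δ := σ - kronPow ρ n with hΔdef
  have hkH : (kronPow ρ n).IsHermitian := kron_herm hρH n
  have hΔH : Δ.IsHermitian := hσH.sub hkH
  obtain ⟨Z, hZrow, hZcol, hZdec⟩ := herm_decomp hΔH
  set lam : (Fin n → ι) → ℝ := hΔH.eigenvalues with hlamdef
  -- trace distance
  have hdist' : ∑ r0, |lam r0| ≤ 1/100 := by
    have e : traceDist σ (kronPow ρ n) = ∑ r0, |lam r0| := by
      rw [traceDist, dif_pos hΔH]
    rw [← e]
    exact hdist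
  -- Kronecker decomposition data
  set u : (Fin n → ι) → (Fin n → ι) → ℂ := fun s i => ∏ k, V (i k) (s k) with hudef
  set wre : (Fin n → ι) → ℝ := fun s => ∏ k, p (s k) with hwredef
  have hkdec : kronPow ρ n = ∑ s : Fin n → ι, ((wre s : ℝ) : ℂ) • outer (u s) :=
    kron_decomp ρ p V hVdec n
  have hwre0 : ∀ s, 0 ≤ wre s := fun s => Finset.prod_nonneg fun k _ => hp0 _
  have hucomp : ∀ i i', ∑ s : Fin n → ι, u s i * (starRingEnd ℂ) (u s i')
      = if i = i' then 1 else 0 := by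
    intro i i'
    have h1 : ∀ s : Fin n → ι, u s i * (starRingEnd ℂ) (u s i')
        = ∏ k, (V (i k) (s k) * (starRingEnd ℂ) (V (i' k) (s k))) := by
      intro s
      rw [hudef]
      simp only []
      rw [map_prod, Finset.prod_mul_distrib]
    rw [Finset.sum_congr rfl fun s (_ : s ∈ Finset.univ) => h1 s]
    have h2 := (Finset.prod_univ_sum (fun _ : Fin n => (Finset.univ : Finset ι))
      (fun k j => V (i k) j * (starRingEnd ℂ) (V (i' k) j))).symm
    rw [Fintype.piFinset_univ] at h2
    rw [h2]
    rw [Finset.prod_congr rfl fun k (_ : k ∈ Finset.univ) => hVrow (i k) (i' k)]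
    exact prod_delta i i'
  have hunorm : ∀ s, ∑ i, Complex.normSq (u s i) = 1 := by
    intro s
    have h1 : ∀ i : Fin n → ι, Complex.normSq (u s i)
        = ∏ k, Complex.normSq (V (i k) (s k)) := by
      intro i
      rw [hudef]
      simp only []
      exact map_prod Complex.normSq _ _
    rw [Finset.sum_congr rfl fun i (_ : i ∈ Finset.univ) => h1 i]
    have h2 := (Finset.prod_univ_sum (fun _ : Fin n => (Finset.univ : Finset ι))
      (fun k l => Complex.normSq (V l (s k)))).symm
    rw [Fintype.piFinset_univ] at h2
    rw [h2]
    rw [Finset.prod_congr rfl fun k (_ : k ∈ Finset.univ) => col_unit V hVcol (s k)]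
    simp
  -- unit columns of W and Z
  have hWunit : ∀ j, ∑ i, Complex.normSq (W i j) = 1 := col_unit W hWcol
  have hZunit : ∀ j, ∑ i, Complex.normSq (Z i j) = 1 := col_unit Z hZcol
  -- the real quantities
  set QZ : (Fin n → ι) → ℝ := fun r0 => ∑ j ∈ S, Complex.normSq (ipc (fun i => W i j) (fun i => Z i r0)) with hQZdef
  set qq : (Fin n → ι) → ℝ := fun s => ∑ j ∈ S, Complex.normSq (ipc (fun i => W i j) (u s)) with hqqdef
  have hQZ0 : ∀ r0, 0 ≤ QZ r0 := fun r0 => Finset.sum_nonneg fun j _ => Complex.normSq_nonneg _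
  have hqq0 : ∀ s, 0 ≤ qq s := fun s => Finset.sum_nonneg fun j _ => Complex.normSq_nonneg _
  have hQZ1 : ∀ r0, QZ r0 ≤ 1 := by
    intro r0
    exact bessel (fun j i => W i j) hWrow (fun i => Z i r0) (hZunit r0) S
  have hqq1 : ∀ s, qq s ≤ 1 := by
    intro s
    exact bessel (fun j i => W i j) hWrow (u s) (hunorm s) S
  -- ∑ qq = m
  have hqqsum : ∑ s : Fin n → ι, qq s = (m : ℝ) := by
    rw [hqqdef]
    simp only []
    rw [Finset.sum_comm]
    have h1 : ∀ j, ∑ s : Fin n → ι, Complex.normSq (ipc (fun i => W i j) (u s))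
        = ∑ i, Complex.normSq (W i j) := by
      intro j
      rw [Finset.sum_congr rfl fun s (_ : s ∈ Finset.univ) =>
        ipc_normSq_symm (fun i => W i j) (u s)]
      exact parseval u hucomp (fun i => W i j)
    rw [Finset.sum_congr rfl fun j (_ : j ∈ S) => h1 j]
    rw [Finset.sum_congr rfl fun j (_ : j ∈ S) => hWunit j]
    rw [Finset.sum_const, hmdef]
    simp
  -- complex identities
  have hσq : ∀ j, qf σ (fun i => W i j) = ((μ j : ℝ) : ℂ) := by
    intro j
    rw [hWdec, qf_sum_outer]
    have h1 : ∀ l, Complex.normSq (ipc (fun i => W i j) (fun i => W i l))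
        = if j = l then 1 else 0 := by
      intro l
      have h := hWcol j l
      have e : ipc (fun i => W i j) (fun i => W i l) = if j = l then 1 else 0 := h
      rw [e]
      by_cases hjl : j = l <;> simp [hjl]
    rw [Finset.sum_congr rfl fun l (_ : l ∈ Finset.univ) => by rw [h1 l]]
    have h2 : ∀ l, ((μ l : ℝ):ℂ) * (((if j = l then (1:ℝ) else 0) : ℝ) : ℂ)
        = if j = l then ((μ l : ℝ):ℂ) else 0 := by
      intro l
      by_cases hjl : j = l <;> simp [hjl]
    rw [Finset.sum_congr rfl fun l (_ : l ∈ Finset.univ) => h2 l]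
    rw [Finset.sum_ite_eq]
    simp
  have hμsum : ∑ l, μ l = 1 := by
    have h1 : Matrix.trace σ
        = ∑ l, ((μ l : ℝ):ℂ) * ((∑ i, Complex.normSq (W i l) : ℝ) : ℂ) := by
      rw [hWdec]
      exact trace_sum_outer _ _
    rw [hσtr] at h1
    rw [Finset.sum_congr rfl fun l (_ : l ∈ Finset.univ) => by rw [hWunit l]] at h1
    have h2 : ∑ l, ((μ l : ℝ):ℂ) = 1 := by
      rw [← h1.symm]
      refine Finset.sum_congr rfl fun l _ => ?_
      norm_num
    exact_mod_cast h2
  have hSsum : ∑ j ∈ S, μ j = 1 := by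
    rw [hSdef, Finset.sum_filter_ne_zero]
    exact hμsum
  have hσQ : ∑ j ∈ S, qf σ (fun i => W i j) = 1 := by
    rw [Finset.sum_congr rfl fun j (_ : j ∈ S) => hσq j]
    have h1 : ∑ j ∈ S, ((μ j : ℝ):ℂ) = ((∑ j ∈ S, μ j : ℝ) : ℂ) := by
      push_cast
      rfl
    rw [h1, hSsum]
    norm_num
  have hΔQ : ∑ j ∈ S, qf Δ (fun i => W i j)
      = ∑ r0, ((lam r0 : ℝ):ℂ) * ((QZ r0 : ℝ):ℂ) := by
    have h1 : ∀ j, qf Δ (fun i => W i j) = ∑ r0, ((lam r0:ℝ):ℂ)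
        * ((Complex.normSq (ipc (fun i => W i j) (fun i => Z i r0)) : ℝ):ℂ) := by
      intro j
      rw [hZdec, qf_sum_outer]
    rw [Finset.sum_congr rfl fun j (_ : j ∈ S) => h1 j, Finset.sum_comm]
    refine Finset.sum_congr rfl fun r0 _ => ?_
    rw [← Finset.mul_sum]
    congr 1
    rw [hQZdef]
    push_cast
    rfl
  have hρQ : ∑ j ∈ S, qf (kronPow ρ n) (fun i => W i j)
      = ∑ s : Fin n → ι, ((wre s:ℝ):ℂ) * ((qq s:ℝ):ℂ) := by
    have h1 : ∀ j, qf (kronPow ρ n) (fun i => W i j) = ∑ s : Fin n → ι, ((wre s:ℝ):ℂ)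
        * ((Complex.normSq (ipc (fun i => W i j) (u s)) : ℝ):ℂ) := by
      intro j
      rw [hkdec, qf_sum_outer]
    rw [Finset.sum_congr rfl fun j (_ : j ∈ S) => h1 j, Finset.sum_comm]
    refine Finset.sum_congr rfl fun s _ => ?_
    rw [← Finset.mul_sum]
    congr 1
    rw [hqqdef]
    push_cast
    rfl
  have hQadd : (1:ℂ) = (∑ r0, ((lam r0:ℝ):ℂ) * ((QZ r0:ℝ):ℂ))
      + ∑ s : Fin n → ι, ((wre s:ℝ):ℂ) * ((qq s:ℝ):ℂ) := by
    rw [← hΔQ, ← hρQ, ← hσQ, ← Finset.sum_add_distrib]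
    refine Finset.sum_congr rfl fun j _ => ?_
    rw [← qf_add]
    congr 1
    rw [hΔdef]
    exact (sub_add_cancel σ (kronPow ρ n)).symm
  have hreal : (1:ℝ) = (∑ r0, lam r0 * QZ r0) + ∑ s : Fin n → ι, wre s * qq s := by
    exact_mod_cast hQadd
  have hρlower : (99/100 : ℝ) ≤ ∑ s : Fin n → ι, wre s * qq s := by
    have habs : |∑ r0, lam r0 * QZ r0| ≤ 1/100 := by
      calc |∑ r0, lam r0 * QZ r0| ≤ ∑ r0, |lam r0 * QZ r0| := Finset.abs_sum_le_sum_abs _ _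
      _ ≤ ∑ r0, |lam r0| := by
          apply Finset.sum_le_sum
          intro r0 _
          rw [abs_mul]
          calc |lam r0| * |QZ r0| ≤ |lam r0| * 1 := by
                apply mul_le_mul_of_nonneg_left _ (abs_nonneg _)
                rw [abs_of_nonneg (hQZ0 r0)]
                exact hQZ1 r0
          _ = |lam r0| := mul_one _
      _ ≤ 1/100 := hdist'
    have h := abs_le.mp habs
    linarith [hreal, h.1, h.2]
  -- the significant-event bound
  set X := (n:ℝ) * E + α * Real.sqrt n with hX
  set t2 : ℝ := (2:ℝ) ^ (-X) with ht2
  have ht2pos : 0 < t2 := Real.rpow_pos_of_pos (by norm_num) _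
  set Good := Finset.univ.filter (fun s : Fin n → ι => α * Real.sqrt n ≤ ∑ k, v (s k))
    with hGood
  have hGoodw : (1/25 : ℝ) ≤ ∑ s ∈ Good, wre s := htail n hn
  have hwre_le : ∀ s ∈ Good, wre s ≤ t2 := by
    intro s hs
    simp only [hGood, Finset.mem_filter, Finset.mem_univ, true_and] at hs
    by_cases hz : ∃ k, p (s k) = 0
    · obtain ⟨k, hk⟩ := hz
      have h0 : wre s = 0 := Finset.prod_eq_zero (Finset.mem_univ k) hk
      rw [h0]
      exact le_of_lt ht2pos
    · push_neg at hz
      have hpos : ∀ k, 0 < p (s k) := fun k => lt_of_le_of_ne (hp0 _) (Ne.symm (hz k))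
      have hwpos : 0 < wre s := Finset.prod_pos fun k _ => hpos k
      have hlog : Real.logb 2 (wre s) = ∑ k, Real.logb 2 (p (s k)) := by
        rw [hwredef]
        exact Real.logb_prod _ _ (fun k _ => ne_of_gt (hpos k))
      have hlogv : ∀ k : Fin n, Real.logb 2 (p (s k)) = -E - v (s k) := by
        intro k
        rw [hvdef]
        ring
      have hsum2 : Real.logb 2 (wre s) = -((n:ℝ)*E) - ∑ k, v (s k) := by
        rw [hlog, Finset.sum_congr rfl fun k (_ : k ∈ Finset.univ) => hlogv k,
          Finset.sum_sub_distrib, Finset.sum_const]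
        simp [Finset.card_univ, nsmul_eq_mul]
        try ring
      have hle : Real.logb 2 (wre s) ≤ -X := by
        rw [hsum2, hX]
        linarith [hs]
      calc wre s = (2:ℝ) ^ (Real.logb 2 (wre s)) :=
            (Real.rpow_logb (by norm_num) (by norm_num) hwpos).symm
      _ ≤ (2:ℝ) ^ (-X) := (Real.rpow_le_rpow_left_iff (by norm_num : (1:ℝ) < 2)).mpr hle
      _ = t2 := rfl
  have hupper : ∑ s : Fin n → ι, wre s * qq s ≤ t2 * m + (1 - 1/25) := by
    rw [← Finset.sum_filter_add_sum_filter_not Finset.univ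
      (fun s : Fin n → ι => α * Real.sqrt n ≤ ∑ k, v (s k)) (fun s => wre s * qq s)]
    have hA : ∑ s ∈ Good, wre s * qq s ≤ t2 * m := by
      calc ∑ s ∈ Good, wre s * qq s ≤ ∑ s ∈ Good, t2 * qq s := by
            apply Finset.sum_le_sum
            intro s hs
            exact mul_le_mul_of_nonneg_right (hwre_le s hs) (hqq0 s)
      _ ≤ ∑ s : Fin n → ι, t2 * qq s := by
            apply Finset.sum_le_sum_of_subset_of_nonneg (Finset.subset_univ _)
            intro s _ _
            exact mul_nonneg (le_of_lt ht2pos) (hqq0 s)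
      _ = t2 * (m:ℝ) := by rw [← Finset.mul_sum, hqqsum]
    have hB : ∑ s ∈ Finset.univ.filter
        (fun s : Fin n → ι => ¬ (α * Real.sqrt n ≤ ∑ k, v (s k))), wre s * qq s
          ≤ 1 - 1/25 := by
      have h1 : ∑ s ∈ Finset.univ.filter
          (fun s : Fin n → ι => ¬ (α * Real.sqrt n ≤ ∑ k, v (s k))), wre s * qq s
          ≤ ∑ s ∈ Finset.univ.filter
            (fun s : Fin n → ι => ¬ (α * Real.sqrt n ≤ ∑ k, v (s k))), wre s := by
        apply Finset.sum_le_sum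
        intro s _
        calc wre s * qq s ≤ wre s * 1 :=
              mul_le_mul_of_nonneg_left (hqq1 s) (hwre0 s)
        _ = wre s := mul_one _
      have h2 := Finset.sum_filter_add_sum_filter_not Finset.univ
        (fun s : Fin n → ι => α * Real.sqrt n ≤ ∑ k, v (s k)) (fun s => wre s)
      have h3 : ∑ s : Fin n → ι, wre s = 1 := weights_sum_one p hpsum n
      rw [h3] at h2
      linarith [hGoodw]
    linarith [hA, hB]
  have ht2m : (3/100 : ℝ) ≤ t2 * m := by linarith [hρlower, hupper]
  have h2X : (0:ℝ) < (2:ℝ)^X := Real.rpow_pos_of_pos (by norm_num) _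
  have hmX : (3/100 : ℝ) * (2:ℝ)^X ≤ (m:ℝ) := by
    have hmul := mul_le_mul_of_nonneg_right ht2m (le_of_lt h2X)
    have ht2X : t2 * (2:ℝ)^X = 1 := by
      rw [ht2, ← Real.rpow_add (by norm_num)]
      simp
    calc (3/100 : ℝ) * (2:ℝ)^X ≤ (t2 * m) * (2:ℝ)^X := hmul
    _ = (m:ℝ) * (t2 * (2:ℝ)^X) := by ring
    _ = (m:ℝ) := by rw [ht2X, mul_one]
  rw [hrank]
  calc (1/100:ℝ) * (2:ℝ)^X < (3/100) * (2:ℝ)^X := by nlinarith [h2X]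
  _ ≤ (m:ℝ) := hmX

/-- core of the inefficiency bound: there are `δ < 1`, `C > 0`, `n₀` such that
for all `n ≥ n₀`, any pure bipartite state `ψ` whose reduced state is within trace distance
`2(1−δ)` of `ρ^{⊗n}` has Schmidt rank (the rank of `Tr_B |ψ⟩⟨ψ|`) greater than
`C · 2^{nE + α√n}`. -/
theorem schmidt_rank_lower_bound {ι : Type*} [Fintype ι] [DecidableEq ι] [Nonempty ι]
    (ρ : Matrix ι ι ℂ) (hρ : IsDensity ρ)
    (E α β : ℝ)
    (hE : E = -∑ i, hρ.1.isHermitian.eigenvalues i *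
        Real.logb 2 (hρ.1.isHermitian.eigenvalues i))
    (hα : α = Real.sqrt (∑ i, hρ.1.isHermitian.eigenvalues i *
        (Real.logb 2 (hρ.1.isHermitian.eigenvalues i) + E) ^ 2))
    (hβ : β = ∑ i, hρ.1.isHermitian.eigenvalues i *
        |Real.logb 2 (hρ.1.isHermitian.eigenvalues i) + E| ^ 3)
    (hαpos : 0 < α) :
    ∃ δ C : ℝ, ∃ n₀ : ℕ, δ < 1 ∧ 0 < C ∧
      ∀ n : ℕ, n₀ ≤ n →
      ∀ (B : Type) [Fintype B] [DecidableEq B] [Nonempty B],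
      ∀ ψ : (Fin n → ι) × B → ℂ, (∑ ab, ‖ψ ab‖ ^ 2 = 1) →
        traceDist (ptraceB (outer ψ)) (kronPow ρ n) ≤ 2 * (1 - δ) →
        C * (2 : ℝ) ^ ((n : ℝ) * E + α * Real.sqrt n) < ((ptraceB (outer ψ)).rank : ℝ) := by
  classical
  obtain ⟨V, hVrow, hVcol, hVdec⟩ := herm_decomp hρ.1.isHermitian
  set p := hρ.1.isHermitian.eigenvalues with hpdef
  have hp0 : ∀ i, 0 ≤ p i := fun i => hρ.1.eigenvalues_nonneg i
  have hpsum : ∑ i, p i = 1 := by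
    have h1 : Matrix.trace ρ
        = ∑ l, ((p l : ℝ):ℂ) * ((∑ i, Complex.normSq (V i l) : ℝ) : ℂ) := by
      rw [hVdec]
      exact trace_sum_outer _ _
    rw [hρ.2] at h1
    rw [Finset.sum_congr rfl fun l (_ : l ∈ Finset.univ) => by rw [col_unit V hVcol l]] at h1
    have h2 : ∑ l, ((p l : ℝ):ℂ) = 1 := by
      rw [← h1.symm]
      refine Finset.sum_congr rfl fun l _ => ?_
      norm_num
    exact_mod_cast h2
  have hm1 : ∑ i, p i * (-(Real.logb 2 (p i) + E)) = 0 := by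
    have hElog : ∑ i, p i * Real.logb 2 (p i) = -E := by
      rw [hE]
      ring
    calc ∑ i, p i * (-(Real.logb 2 (p i) + E))
        = ∑ i, (-(p i * Real.logb 2 (p i)) - E * p i) :=
          Finset.sum_congr rfl fun i _ => by ring
    _ = -(∑ i, p i * Real.logb 2 (p i)) - E * (∑ i, p i) := by
        rw [Finset.sum_sub_distrib, ← Finset.mul_sum, Finset.sum_neg_distrib]
    _ = 0 := by rw [hElog, hpsum]; ring
  have hm2 : ∑ i, p i * (-(Real.logb 2 (p i) + E))^2 = α^2 := by
    have hnn : 0 ≤ ∑ i, p i * (Real.logb 2 (p i) + E)^2 :=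
      Finset.sum_nonneg fun i _ => mul_nonneg (hp0 i) (sq_nonneg _)
    have hα2 : α^2 = ∑ i, p i * (Real.logb 2 (p i) + E)^2 := by
      rw [hα]
      exact Real.sq_sqrt hnn
    rw [hα2]
    exact Finset.sum_congr rfl fun i _ => by ring
  obtain ⟨n₀, hcore⟩ := main_core ρ p V hVrow hVcol hVdec hρ.1.isHermitian E α hαpos
    hp0 hpsum hm1 hm2
  refine ⟨199/200, 1/100, n₀, by norm_num, by norm_num,
    fun n hn B _ _ _ ψ h1 h2 => ?_⟩
  exact hcore n hn B ψ h1 (by linarith [h2] : traceDist (ptraceB (outer ψ)) (kronPow ρ n) ≤ 1/100)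
end
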